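/- arXiv:2509.15444 — 8 statements merged into one kernel-verified Lean document; each statement's English description precedes it below -/
import Mathlib

section
/- Let g:[0,1]→(0,∞) be a nonincreasing function, and let U be a random variable with P(U ≤ u) ≤ u for all u ∈ [0,1]. Then for any constant c > 0, E[ 1{U ≤ c·g(U)} / g(U) ] ≤ c. -/
/-!
Let `S = {u ∈ [0,1] | u ≤ c g(u)}` and `u₀ = sup S`. The event `U ≤ c g(U)` says `U ∈ S`, so it
lies in `{U ≤ u₀}`, whose probability is at most `u₀` by superuniformity. Since `g` is
nonincreasing, any two `u, v ∈ S` satisfy `v ≤ c g(u)`; hence on the event `v / g(U) ≤ c`, and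
`v · E[1{U ≤ c g(U)} / g(U)] ≤ c u₀` for every `v ∈ S`. Letting `v` tend to `u₀` gives the
claim, unless `u₀ = 0`, in which case the event is null.
-/

open MeasureTheory

theorem AntitoneOn.le_mul_of_le_mul {g : ℝ → ℝ} {s : Set ℝ} (hg : AntitoneOn g s) {c : ℝ}
    (hc : 0 ≤ c) {u v : ℝ} (hu : u ∈ s) (hv : v ∈ s) (hu_le : u ≤ c * g u)
    (hv_le : v ≤ c * g v) : v ≤ c * g u := by
  rcases le_or_gt u v with huv | hvu
  · exact hv_le.trans (mul_le_mul_of_nonneg_left (hg hu hv huv) hc)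
  · exact hvu.le.trans hu_le

theorem Real.sSup_mul_le {S : Set ℝ} {a b : ℝ} (hne : S.Nonempty) (ha : 0 ≤ a)
    (h : ∀ v ∈ S, v * a ≤ b) : sSup S * a ≤ b := by
  rcases ha.eq_or_lt with rfl | ha
  · obtain ⟨v, hv⟩ := hne
    simpa using h v hv
  · exact (le_div_iff₀ ha).1 (csSup_le hne fun v hv => (le_div_iff₀ ha).2 (h v hv))

section

variable {Ω : Type*} [MeasurableSpace Ω] {μ : Measure Ω} [IsFiniteMeasure μ]
  {f : Ω → ℝ} {A : Set Ω} {c : ℝ}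

theorem mul_setIntegral_le_mul_measureReal {v : ℝ} (hv : 0 ≤ v) (hf : ∀ ω, 0 ≤ f ω)
    (hf_le : ∀ ω ∈ A, v * f ω ≤ c) : v * ∫ ω in A, f ω ∂μ ≤ c * μ.real A := by
  rw [← integral_const_mul]
  refine (Real.le_norm_self _).trans (norm_setIntegral_le_of_norm_le_const (measure_lt_top μ A) ?_)
  intro ω hω
  rw [Real.norm_of_nonneg (mul_nonneg hv (hf ω))]
  exact hf_le ω hω

theorem integral_le_of_forall_mul_le {S : Set ℝ} (hc : 0 ≤ c) (hf : ∀ ω, 0 ≤ f ω)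
    (hf_supp : ∀ ω ∉ A, f ω = 0) (hS : S.Nonempty) (hS_nonneg : ∀ v ∈ S, 0 ≤ v)
    (hμA : μ.real A ≤ sSup S) (hf_le : ∀ v ∈ S, ∀ ω ∈ A, v * f ω ≤ c) :
    ∫ ω, f ω ∂μ ≤ c := by
  rw [← setIntegral_eq_integral_of_forall_compl_eq_zero hf_supp]
  rcases measureReal_nonneg.eq_or_lt with hA | hA
  · rw [setIntegral_measure_zero f ((measureReal_eq_zero_iff).1 hA.symm)]
    exact hc
  · have hsup : sSup S * ∫ ω in A, f ω ∂μ ≤ sSup S * c :=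
      calc sSup S * ∫ ω in A, f ω ∂μ ≤ c * μ.real A :=
            Real.sSup_mul_le hS (integral_nonneg hf) fun v hv =>
              mul_setIntegral_le_mul_measureReal (hS_nonneg v hv) hf (hf_le v hv)
        _ ≤ sSup S * c := by rw [mul_comm]; gcongr
    exact le_of_mul_le_mul_left hsup (hA.trans_le hμA)

end

theorem blanchard_roquain_lemma_general
    {Ω : Type*} [MeasurableSpace Ω] (μ : Measure Ω) [IsProbabilityMeasure μ]
    (U : Ω → ℝ) (hUrange : ∀ ω, U ω ∈ Set.Icc (0:ℝ) 1)
    (hUsuper : ∀ u ∈ Set.Icc (0:ℝ) 1, μ {ω | U ω ≤ u} ≤ ENNReal.ofReal u)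
    (g : ℝ → ℝ) (hg_pos : ∀ u ∈ Set.Icc (0:ℝ) 1, 0 < g u)
    (hg_anti : AntitoneOn g (Set.Icc (0:ℝ) 1))
    (c : ℝ) (hc : 0 < c) :
    ∫ ω, (if U ω ≤ c * g (U ω) then (g (U ω))⁻¹ else 0) ∂μ ≤ c := by
  set S : Set ℝ := {u ∈ Set.Icc 0 1 | u ≤ c * g u}
  have h0S : (0 : ℝ) ∈ S := ⟨Set.left_mem_Icc.2 zero_le_one,
    mul_nonneg hc.le (hg_pos 0 (Set.left_mem_Icc.2 zero_le_one)).le⟩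
  have hSbdd : BddAbove S := ⟨1, fun u hu => hu.1.2⟩
  have hsup : sSup S ∈ Set.Icc (0 : ℝ) 1 :=
    ⟨le_csSup hSbdd h0S, csSup_le ⟨0, h0S⟩ fun u hu => hu.1.2⟩
  have hevent : ∀ ω, U ω ≤ c * g (U ω) → U ω ≤ sSup S :=
    fun ω hω => le_csSup hSbdd ⟨hUrange ω, hω⟩
  refine integral_le_of_forall_mul_le (A := {ω | U ω ≤ sSup S}) hc.le (fun ω => ?_)
    (fun ω hω => if_neg (mt (hevent ω) hω)) ⟨0, h0S⟩ (fun v hv => hv.1.1)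
    (ENNReal.toReal_le_of_le_ofReal hsup.1 (hUsuper _ hsup)) (fun v hv ω _ => ?_)
  · split_ifs
    exacts [(inv_pos.2 (hg_pos _ (hUrange ω))).le, le_rfl]
  · split_ifs with hω
    · rw [← div_eq_mul_inv, div_le_iff₀ (hg_pos _ (hUrange ω))]
      exact hg_anti.le_mul_of_le_mul hc.le (hUrange ω) hv.1 hω hv.2
    · simpa using hc.le

/-- Blanchard–Roquain Lemma 3.2: if `g : [0,1] → (0,∞)` is nonincreasing and `U` is a
superuniform random variable with values in `[0,1]`, then for any `c > 0`,
`E[ 1{U ≤ c·g(U)} / g(U) ] ≤ c`. -/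
theorem blanchard_roquain_lemma
    {Ω : Type*} [MeasurableSpace Ω] (μ : Measure Ω) [IsProbabilityMeasure μ]
    (U : Ω → ℝ) (hUmeas : Measurable U) (hUrange : ∀ ω, U ω ∈ Set.Icc (0:ℝ) 1)
    (hUsuper : ∀ u ∈ Set.Icc (0:ℝ) 1, μ {ω | U ω ≤ u} ≤ ENNReal.ofReal u)
    (g : ℝ → ℝ) (hg_pos : ∀ u ∈ Set.Icc (0:ℝ) 1, 0 < g u)
    (hg_anti : AntitoneOn g (Set.Icc (0:ℝ) 1))
    (c : ℝ) (hc : 0 < c) :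
    ∫ ω, (if U ω ≤ c * g (U ω) then (g (U ω))⁻¹ else 0) ∂μ ≤ c :=
  blanchard_roquain_lemma_general μ U hUrange hUsuper g hg_pos hg_anti c hc
end

section
/- Suppose p_1,…,p_m ∈ [0,1] are independent random variables such that for each j in a set H_0 of null indices, P(p_j ≤ t) ≤ t for all t ∈ [0,1]. Let ŵ_i:[0,1]^m → (0,∞), i=1,…,m, be coordinate-wise nondecreasing functions with Σ_{i∈H_0} E[1/ŵ_i(p_{0,i})] ≤ m, where p_{0,i} replaces p_i by 0. Let U*: [0,1]^m → 2^{{1,…,m}} be a multiple testing procedure such that (a) p_i ≤ q·|U*(p)|/(m·ŵ_i(p)) for all i ∈ U*(p) (self-consistency), and (b) the map p ↦ |U*(p)| is coordinate-wise nonincreasing. Then the false discovery rate E[ |U*(p) ∩ H_0| / max(|U*(p)|,1) ] ≤ q. -/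
/-!
For a null `j`, self-consistency and the monotonicity of `ŵ_j` give
`𝟙{j ∈ U*(p)} / |U*(p)| ≤ 𝟙{p_j ≤ c_j g_j(p_j)} / g_j(p_j)`, where `c_j = q / (m ŵ_j(p_{0,j}))` and
`g_j(u) = |U*(p_{-j}, u)|` depend on `p` only through `p_{-j}`. Given `p_{-j}`, the p-value `p_j` is
still superuniform and `g_j` is nonincreasing, so the Blanchard–Roquain lemma bounds the conditional
expectation by `c_j`, and summing `E[c_j]` over the nulls gives at most `q`.

Neither `ŵ` nor `U*` is assumed measurable: measurability comes from monotonicity alone, since upper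
sets of `ℝⁿ` are null-measurable for any product of σ-finite measures.
-/

open MeasureTheory ProbabilityTheory Finset
open scoped ENNReal

theorem Antitone.aemeasurable_of_isUpperSet {X : Type*} [MeasurableSpace X] [Preorder X]
    {μ : Measure X} {β : Type*} [LinearOrder β] [TopologicalSpace β] [OrderTopology β]
    [SecondCountableTopology β] [MeasurableSpace β] [BorelSpace β]
    (hμ : ∀ s : Set X, IsUpperSet s → NullMeasurableSet s μ) {f : X → β} (hf : Antitone f) :
    AEMeasurable f μ :=
  NullMeasurable.aemeasurable <| measurable_of_Iio (δ := NullMeasurableSpace X μ) (f := f)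
    fun _ => hμ _ fun _ _ hab ha => lt_of_le_of_lt (hf hab) ha

lemma countable_setOf_measure_singleton_pos {α : Type*} [MeasurableSpace α]
    [MeasurableSingletonClass α] (μ : Measure α) [SFinite μ] : {a : α | 0 < μ {a}}.Countable :=
  Measure.countable_meas_pos_of_disjoint_iUnion (fun _ => measurableSet_singleton _)
    fun _ _ hab => Set.disjoint_singleton.mpr hab

section Product

variable {Y : Type*} [MeasurableSpace Y] (μ : Measure ℝ) [SFinite μ] {ν : Measure Y} [SFinite ν]

lemma measure_prod_graph_eq_zero {t : Y → EReal} (ht : AEMeasurable t ν) :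
    μ.prod ν {z | t z.2 = z.1 ∧ μ {z.1} = 0} = 0 := by
  set τ := ht.mk t
  have hτ : Measurable τ := ht.measurable_mk
  have hae : {z : ℝ × Y | t z.2 = z.1 ∧ μ {z.1} = 0} =ᵐ[μ.prod ν]
      {z | τ z.2 = z.1 ∧ μ {z.1} = 0} := by
    refine Filter.eventuallyEq_set.mpr ?_
    filter_upwards [Measure.QuasiMeasurePreserving.ae_eq_comp
      Measure.quasiMeasurePreserving_snd ht.ae_eq_mk] with z (hz : t z.2 = τ z.2)
    simp only [hz]
  have hatoms : MeasurableSet {a : ℝ | μ {a} = 0} := by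
    have : {a : ℝ | μ {a} = 0} = {a | 0 < μ {a}}ᶜ := by ext; simp [pos_iff_ne_zero]
    exact this ▸ (countable_setOf_measure_singleton_pos μ).measurableSet.compl
  have hmeas : MeasurableSet {z : ℝ × Y | τ z.2 = z.1 ∧ μ {z.1} = 0} :=
    (measurableSet_eq_fun (hτ.comp measurable_snd)
      (measurable_coe_real_ereal.comp measurable_fst)).inter (hatoms.preimage measurable_fst)
  rw [measure_congr hae, Measure.prod_apply_symm hmeas]
  refine (lintegral_congr fun y => ?_).trans lintegral_zero
  have hsub : {x : ℝ | τ y = x ∧ μ {x} = 0}.Subsingleton := fun a ha b hb =>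
    EReal.coe_injective (ha.1.symm.trans hb.1)
  rcases hsub.eq_empty_or_singleton with h | ⟨a, h⟩
  · exact (congrArg μ h).trans measure_empty
  · exact (congrArg μ h).trans (h.symm.subset rfl).2

/-- Above `y`, the slice of `U` is a ray starting at `t y`, so `U` is the strict epigraph of the
antitone `t` plus a piece of its graph; that piece is null away from the countably many atoms of
`μ`, and over an atom `a` it is `{a}` times an upper set intersected with a level set of `t`. -/
theorem IsUpperSet.nullMeasurableSet_prod [Preorder Y]
    (hν : ∀ s : Set Y, IsUpperSet s → NullMeasurableSet s ν) {U : Set (ℝ × Y)}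
    (hU : IsUpperSet U) : NullMeasurableSet U (μ.prod ν) := by
  have hU' {x x' : ℝ} {y y' : Y} (hx : x ≤ x') (hy : y ≤ y') (h : (x, y) ∈ U) : (x', y') ∈ U :=
    hU (Prod.mk_le_mk.mpr ⟨hx, hy⟩) h
  set t : Y → EReal := fun y => sInf ((↑) '' {x : ℝ | (x, y) ∈ U})
  have ht : AEMeasurable t ν := Antitone.aemeasurable_of_isUpperSet hν fun y y' h =>
    sInf_le_sInf (Set.image_mono fun _ hx => hU' le_rfl h hx)
  have le_of_mem {x : ℝ} {y : Y} (h : (x, y) ∈ U) : t y ≤ x := sInf_le ⟨x, h, rfl⟩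
  have mem_of_lt {x : ℝ} {y : Y} (h : t y < x) : (x, y) ∈ U := by
    obtain ⟨_, ⟨x', hx', rfl⟩, hlt⟩ := sInf_lt_iff.mp h
    exact hU' (EReal.coe_le_coe_iff.mp hlt.le) le_rfl hx'
  have hdecomp : U = {z | t z.2 < z.1} ∪
      (⋃ a ∈ {a : ℝ | 0 < μ {a}}, {a} ×ˢ {y | (a, y) ∈ U ∧ t y = a}) ∪
      (U ∩ {z | t z.2 = z.1 ∧ μ {z.1} = 0}) := by
    ext ⟨x, y⟩
    constructor
    · intro h
      rcases (le_of_mem h).lt_or_eq with hlt | heq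
      · exact Or.inl (Or.inl hlt)
      by_cases hx : 0 < μ {x}
      · exact Or.inl (Or.inr (Set.mem_biUnion hx ⟨rfl, h, heq⟩))
      · exact Or.inr ⟨h, heq, nonpos_iff_eq_zero.mp (not_lt.mp hx)⟩
    · rintro ((h | h) | h)
      · exact mem_of_lt h
      · obtain ⟨a, -, rfl, h, -⟩ := Set.mem_iUnion₂.mp h
        exact h
      · exact h.1
  rw [hdecomp]
  refine .union (.union ?_ ?_) (.of_null (measure_mono_null Set.inter_subset_right
    (measure_prod_graph_eq_zero μ ht)))
  · exact nullMeasurableSet_lt (ht.comp_quasiMeasurePreserving Measure.quasiMeasurePreserving_snd)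
      (measurable_coe_real_ereal.comp measurable_fst).aemeasurable
  · refine .biUnion (countable_setOf_measure_singleton_pos μ) fun a _ =>
      (measurableSet_singleton a).nullMeasurableSet.prod ?_
    exact (hν _ fun _ _ h hy => hU' le_rfl h hy).inter
      (ht.nullMeasurable (measurableSet_singleton (a : EReal)))

end Product

theorem IsUpperSet.nullMeasurableSet_pi {n : ℕ} (ν : Fin n → Measure ℝ)
    [∀ i, SigmaFinite (ν i)] {U : Set (Fin n → ℝ)} (hU : IsUpperSet U) :
    NullMeasurableSet U (Measure.pi ν) := by
  induction n with
  | zero => exact Subsingleton.measurableSet.nullMeasurableSet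
  | succ n ih =>
    set e := MeasurableEquiv.piFinSuccAbove (fun _ : Fin (n + 1) => ℝ) 0
    have he : Monotone e.symm := fun z z' h => by
      simpa [e, MeasurableEquiv.piFinSuccAbove, Fin.consEquiv, Fin.cons_le_cons] using
        Prod.le_def.mp h
    have hprod := (hU.preimage he).nullMeasurableSet_prod (ν 0) fun _ hs =>
      ih (fun j => ν (Fin.succAbove 0 j)) hs
    have h := hprod.preimage (measurePreserving_piFinSuccAbove ν 0).quasiMeasurePreserving
    rwa [← Set.preimage_comp, e.symm_comp_self, Set.preimage_id] at h

section Update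

variable {ι : Type*} [Fintype ι] [DecidableEq ι] {X : ι → Type*} [∀ i, MeasurableSpace (X i)]
  (ν : ∀ i, Measure (X i)) [∀ i, IsProbabilityMeasure (ν i)]

theorem measurePreserving_update (j : ι) :
    MeasurePreserving (fun p : (∀ i, X i) × X j => Function.update p.1 j p.2)
      ((Measure.pi ν).prod (ν j)) (Measure.pi ν) := by
  refine ⟨measurable_update', (Measure.pi_eq fun s hs => ?_).symm⟩
  have hpre : (fun p : (∀ i, X i) × X j => Function.update p.1 j p.2) ⁻¹' Set.univ.pi s =
      Set.univ.pi (Function.update s j Set.univ) ×ˢ s j := by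
    ext ⟨v, x⟩
    simp only [Set.mem_preimage, Set.mem_univ_pi, Set.mem_prod]
    constructor
    · intro h
      refine ⟨fun i => ?_, by simpa using h j⟩
      rcases eq_or_ne i j with rfl | hi
      · simp
      · simpa [Function.update_of_ne hi] using h i
    · rintro ⟨h, hx⟩ i
      rcases eq_or_ne i j with rfl | hi
      · simpa using hx
      · simpa [Function.update_of_ne hi] using h i
  rw [Measure.map_apply measurable_update' (MeasurableSet.univ_pi hs), hpre, Measure.prod_prod,
    Measure.pi_pi, ← prod_erase_mul _ _ (mem_univ j), ← prod_erase_mul _ _ (mem_univ j),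
    Function.update_self, measure_univ, mul_one]
  congr 1
  exact prod_congr rfl fun i hi => by rw [Function.update_of_ne (ne_of_mem_erase hi)]

theorem lintegral_pi_le_lintegral_lintegral_update (j : ι) (f : (∀ i, X i) → ℝ≥0∞) :
    ∫⁻ v, f v ∂Measure.pi ν ≤ ∫⁻ v, ∫⁻ x, f (Function.update v j x) ∂ν j ∂Measure.pi ν := by
  calc ∫⁻ v, f v ∂Measure.pi ν
      = ∫⁻ v, f v ∂((Measure.pi ν).prod (ν j)).map fun p => Function.update p.1 j p.2 := by
        rw [(measurePreserving_update ν j).map_eq]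
    _ ≤ _ := lintegral_map_le _ _
    _ ≤ _ := lintegral_prod_le _

end Update

theorem ofReal_integral_le_lintegral_ofReal {Ω : Type*} [MeasurableSpace Ω] {μ : Measure Ω}
    {f : Ω → ℝ} (hf : 0 ≤ f) : ENNReal.ofReal (∫ ω, f ω ∂μ) ≤ ∫⁻ ω, ENNReal.ofReal (f ω) ∂μ :=
  calc ENNReal.ofReal (∫ ω, f ω ∂μ) = ‖∫ ω, f ω ∂μ‖ₑ :=
        (Real.enorm_of_nonneg (integral_nonneg hf)).symm
    _ ≤ ∫⁻ ω, ‖f ω‖ₑ ∂μ := enorm_integral_le_lintegral_enorm f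
    _ = ∫⁻ ω, ENNReal.ofReal (f ω) ∂μ := lintegral_congr fun ω => Real.enorm_of_nonneg (hf ω)

theorem measure_Iic_le_ofReal_of_Icc {ν : Measure ℝ} [IsProbabilityMeasure ν]
    (h : ∀ t ∈ Set.Icc (0 : ℝ) 1, ν (Set.Iic t) ≤ ENNReal.ofReal t) (t : ℝ) :
    ν (Set.Iic t) ≤ ENNReal.ofReal t := by
  rcases lt_or_ge t 0 with ht | ht
  · calc ν (Set.Iic t) ≤ ν (Set.Iic 0) := measure_mono (Set.Iic_subset_Iic.mpr ht.le)
      _ ≤ ENNReal.ofReal 0 := h 0 ⟨le_rfl, zero_le_one⟩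
      _ = ENNReal.ofReal t := by simp [ENNReal.ofReal_of_nonpos ht.le]
  rcases le_or_gt t 1 with ht1 | ht1
  · exact h t ⟨ht, ht1⟩
  · calc ν (Set.Iic t) ≤ 1 := prob_le_one
      _ ≤ ENNReal.ofReal t := by simpa using ENNReal.ofReal_le_ofReal ht1.le

/-- The integrand `𝟙{x ≤ c g} / g` of the Blanchard–Roquain lemma, with `max g 1` in place of `g`
so that it stays bounded where `g` vanishes. -/
noncomputable def brTerm (c g x : ℝ) : ℝ := if x ≤ c * g then (max g 1)⁻¹ else 0

lemma brTerm_nonneg (c g x : ℝ) : 0 ≤ brTerm c g x := by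
  unfold brTerm; split_ifs <;> positivity

lemma measurable_brTerm : Measurable fun p : ℝ × ℝ × ℝ => brTerm p.1 p.2.1 p.2.2 :=
  Measurable.ite (measurableSet_le (by fun_prop) (by fun_prop)) (by fun_prop) measurable_const

lemma Antitone.exists_between_of_le_mul {c : ℝ} (hc : 0 ≤ c) {g : ℝ → ℝ} (hg : Antitone g) :
    ∃ T, ∀ x, x ≤ c * g x → x ≤ T ∧ T ≤ c * g x := by
  rcases Set.eq_empty_or_nonempty {x | x ≤ c * g x} with hA | ⟨x₀, hx₀⟩
  · exact ⟨0, fun x hx => absurd hx (Set.eq_empty_iff_forall_notMem.mp hA x)⟩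
  have hA {x} (hx : x ≤ c * g x) {x'} (hx' : x' ≤ c * g x') : x' ≤ c * g x :=
    (le_total x' x).elim (fun h => h.trans hx) fun h =>
      hx'.trans (mul_le_mul_of_nonneg_left (hg h) hc)
  exact ⟨sSup {x | x ≤ c * g x}, fun x hx =>
    ⟨le_csSup ⟨c * g x₀, fun _ => hA hx₀⟩ hx, csSup_le ⟨x₀, hx₀⟩ fun _ => hA hx⟩⟩

/-- The Blanchard–Roquain lemma. -/
theorem lintegral_brTerm_le {ν : Measure ℝ} (hν : ∀ t, ν (Set.Iic t) ≤ ENNReal.ofReal t)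
    {c : ℝ} (hc : 0 ≤ c) {g : ℝ → ℝ} (hg : Antitone g) :
    ∫⁻ x, ENNReal.ofReal (brTerm c (g x) x) ∂ν ≤ ENNReal.ofReal c := by
  obtain ⟨T, hT⟩ := hg.exists_between_of_le_mul hc
  rcases le_or_gt T 0 with hT0 | hT0
  · calc ∫⁻ x, ENNReal.ofReal (brTerm c (g x) x) ∂ν ≤ ∫⁻ x, (Set.Iic 0).indicator 1 x ∂ν := by
          refine lintegral_mono fun x => ?_
          unfold brTerm
          split_ifs with hx
          · rw [Set.indicator_of_mem (Set.mem_Iic.mpr ((hT x hx).1.trans hT0))]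
            exact ENNReal.ofReal_le_one.mpr (inv_le_one_of_one_le₀ (le_max_right _ _))
          · simp
      _ = ν (Set.Iic 0) := lintegral_indicator_one measurableSet_Iic
      _ ≤ ENNReal.ofReal c := (hν 0).trans (ENNReal.ofReal_le_ofReal hc)
  · calc ∫⁻ x, ENNReal.ofReal (brTerm c (g x) x) ∂ν
          ≤ ∫⁻ x, (Set.Iic T).indicator (fun _ => ENNReal.ofReal (c / T)) x ∂ν := by
          refine lintegral_mono fun x => ?_
          unfold brTerm
          split_ifs with hx
          · rw [Set.indicator_of_mem (Set.mem_Iic.mpr (hT x hx).1)]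
            refine ENNReal.ofReal_le_ofReal ((le_div_iff₀ hT0).mpr ?_)
            calc (max (g x) 1)⁻¹ * T ≤ (max (g x) 1)⁻¹ * (c * max (g x) 1) :=
                  mul_le_mul_of_nonneg_left ((hT x hx).2.trans
                    (mul_le_mul_of_nonneg_left (le_max_left _ _) hc)) (by positivity)
              _ = c := by field_simp
          · simp
      _ = ENNReal.ofReal (c / T) * ν (Set.Iic T) := lintegral_indicator_const measurableSet_Iic _
      _ ≤ ENNReal.ofReal (c / T) * ENNReal.ofReal T := mul_le_mul_right (hν T) _
      _ = ENNReal.ofReal c := by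
          rw [← ENNReal.ofReal_mul (by positivity), div_mul_cancel₀ _ hT0.ne']

section SelfConsistent

variable {m : ℕ} {q : ℝ} {what : Fin m → (Fin m → ℝ) → ℝ} {Ustar : (Fin m → ℝ) → Finset (Fin m)}

/-- The constant `c = q / (m ŵ_j(p_{0,j}))` of the Blanchard–Roquain lemma for the `j`-th null. -/
noncomputable def weightedLevel (q : ℝ) (what : Fin m → (Fin m → ℝ) → ℝ) (j : Fin m)
    (v : Fin m → ℝ) : ℝ :=
  q / (m * what j (Function.update v j 0))

lemma weightedLevel_update (j : Fin m) (v : Fin m → ℝ) (x : ℝ) :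
    weightedLevel q what j (Function.update v j x) = weightedLevel q what j v := by
  simp only [weightedLevel, Function.update_idem]

lemma weightedLevel_nonneg (hq : 0 ≤ q) (hw_pos : ∀ i v, 0 < what i v) (j : Fin m)
    (v : Fin m → ℝ) : 0 ≤ weightedLevel q what j v :=
  div_nonneg hq (mul_nonneg m.cast_nonneg (hw_pos _ _).le)

lemma weightedLevel_antitone (hq : 0 ≤ q) (hw_pos : ∀ i v, 0 < what i v)
    (hw_mono : ∀ i, Monotone (what i)) (j : Fin m) : Antitone (weightedLevel q what j) :=
  fun v w h => by
    simp only [weightedLevel, ← div_div]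
    exact div_le_div_of_nonneg_left (div_nonneg hq m.cast_nonneg) (hw_pos _ _)
      (hw_mono j (update_le_update_iff.mpr ⟨le_rfl, fun i _ => h i⟩))

theorem fdp_le_sum_brTerm (hq : 0 ≤ q) (hw_pos : ∀ i v, 0 < what i v)
    (hw_mono : ∀ i, Monotone (what i))
    (hSC : ∀ v : Fin m → ℝ, ∀ i ∈ Ustar v,
      v i ≤ q * ((Ustar v).card : ℝ) / ((m : ℝ) * what i v))
    (H0 : Finset (Fin m)) {v : Fin m → ℝ} (hv : 0 ≤ v) :
    ((Ustar v ∩ H0).card : ℝ) / max ((Ustar v).card : ℝ) 1 ≤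
      ∑ j ∈ H0, brTerm (weightedLevel q what j v) (Ustar v).card (v j) := by
  rw [div_eq_mul_inv, inter_comm, ← nsmul_eq_mul, ← sum_const, ← sum_ite_mem]
  refine sum_le_sum fun j _ => ?_
  split_ifs with hj
  · refine (if_pos ?_).symm.le
    have hm : (0 : ℝ) < m := Nat.cast_pos.mpr j.pos
    calc v j ≤ q * (Ustar v).card / (m * what j v) := hSC v j hj
      _ ≤ q * (Ustar v).card / (m * what j (Function.update v j 0)) := by
          refine div_le_div_of_nonneg_left (by positivity) (mul_pos hm (hw_pos _ _))
            (mul_le_mul_of_nonneg_left (hw_mono j ?_) hm.le)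
          exact (update_le_update_iff.mpr ⟨hv j, fun _ _ => le_rfl⟩).trans_eq
            (Function.update_eq_self j v)
      _ = weightedLevel q what j v * (Ustar v).card := by
          simp only [weightedLevel]; ring
  · exact brTerm_nonneg _ _ _

theorem aemeasurable_weightedLevel (ν : Fin m → Measure ℝ) [∀ i, SigmaFinite (ν i)]
    (hq : 0 ≤ q) (hw_pos : ∀ i v, 0 < what i v) (hw_mono : ∀ i, Monotone (what i)) (j : Fin m) :
    AEMeasurable (weightedLevel q what j) (Measure.pi ν) :=
  (weightedLevel_antitone hq hw_pos hw_mono j).aemeasurable_of_isUpperSet fun _ hs =>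
    hs.nullMeasurableSet_pi ν

theorem aemeasurable_brTerm_weightedLevel (ν : Fin m → Measure ℝ) [∀ i, SigmaFinite (ν i)]
    (hq : 0 ≤ q) (hw_pos : ∀ i v, 0 < what i v) (hw_mono : ∀ i, Monotone (what i))
    (hUanti : ∀ v₁ v₂ : Fin m → ℝ, v₁ ≤ v₂ → (Ustar v₂).card ≤ (Ustar v₁).card) (j : Fin m) :
    AEMeasurable (fun v => brTerm (weightedLevel q what j v) (Ustar v).card (v j))
      (Measure.pi ν) := by
  have hcard : AEMeasurable (fun v => ((Ustar v).card : ℝ)) (Measure.pi ν) :=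
    Antitone.aemeasurable_of_isUpperSet (fun _ hs => hs.nullMeasurableSet_pi ν) fun v w h =>
      Nat.cast_le.mpr (hUanti v w h)
  exact measurable_brTerm.comp_aemeasurable <|
    (aemeasurable_weightedLevel ν hq hw_pos hw_mono j).prodMk
      (hcard.prodMk (measurable_pi_apply j).aemeasurable)

theorem lintegral_brTerm_weightedLevel_le (ν : Fin m → Measure ℝ)
    [∀ i, IsProbabilityMeasure (ν i)] {j : Fin m}
    (hν : ∀ t, ν j (Set.Iic t) ≤ ENNReal.ofReal t) (hq : 0 ≤ q) (hw_pos : ∀ i v, 0 < what i v)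
    (hUanti : ∀ v₁ v₂ : Fin m → ℝ, v₁ ≤ v₂ → (Ustar v₂).card ≤ (Ustar v₁).card) :
    ∫⁻ v, ENNReal.ofReal (brTerm (weightedLevel q what j v) (Ustar v).card (v j)) ∂Measure.pi ν ≤
      ∫⁻ v, ENNReal.ofReal (weightedLevel q what j v) ∂Measure.pi ν := by
  refine (lintegral_pi_le_lintegral_lintegral_update ν j _).trans (lintegral_mono fun v => ?_)
  simp only [weightedLevel_update, Function.update_self]
  exact lintegral_brTerm_le hν (weightedLevel_nonneg hq hw_pos j v) fun x y h =>
    Nat.cast_le.mpr (hUanti _ _ (update_le_update_iff.mpr ⟨h, fun _ _ => le_rfl⟩))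

theorem lintegral_weightedLevel_map {Ω : Type*} [MeasurableSpace Ω] {μ : Measure Ω}
    [IsFiniteMeasure μ] (hq : 0 ≤ q) (hw_pos : ∀ i v, 0 < what i v)
    (hw_mono : ∀ i, Monotone (what i)) {P : Ω → Fin m → ℝ} (hP : Measurable P)
    (hP0 : ∀ ω, 0 ≤ P ω) {ν : Fin m → Measure ℝ} [∀ i, SigmaFinite (ν i)]
    (hlaw : μ.map P = Measure.pi ν) (j : Fin m) :
    ∫⁻ v, ENNReal.ofReal (weightedLevel q what j v) ∂Measure.pi ν =
      ENNReal.ofReal (q / m * ∫ ω, (what j (Function.update (P ω) j 0))⁻¹ ∂μ) := by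
  have hlevel : AEMeasurable (weightedLevel q what j) (μ.map P) :=
    hlaw ▸ aemeasurable_weightedLevel ν hq hw_pos hw_mono j
  have hint : Integrable (fun ω => weightedLevel q what j (P ω)) μ :=
    .mono' (integrable_const (weightedLevel q what j 0))
      (hlevel.comp_aemeasurable hP.aemeasurable).aestronglyMeasurable <| .of_forall fun ω => by
        rw [Real.norm_of_nonneg (weightedLevel_nonneg hq hw_pos j _)]
        exact weightedLevel_antitone hq hw_pos hw_mono j (hP0 ω)
  rw [← hlaw, lintegral_map' hlevel.ennreal_ofReal hP.aemeasurable,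
    ← ofReal_integral_eq_lintegral_ofReal hint
      (.of_forall fun _ => weightedLevel_nonneg hq hw_pos j _), ← integral_const_mul]
  simp only [weightedLevel]
  congr 2 with ω
  ring

theorem sum_lintegral_weightedLevel_le {Ω : Type*} [MeasurableSpace Ω] {μ : Measure Ω}
    [IsFiniteMeasure μ] (hq : 0 ≤ q) (hw_pos : ∀ i v, 0 < what i v)
    (hw_mono : ∀ i, Monotone (what i)) {P : Ω → Fin m → ℝ} (hP : Measurable P)
    (hP0 : ∀ ω, 0 ≤ P ω) {ν : Fin m → Measure ℝ} [∀ i, SigmaFinite (ν i)]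
    (hlaw : μ.map P = Measure.pi ν) (H0 : Finset (Fin m))
    (hw_cond : ∑ i ∈ H0, ∫ ω, (what i (Function.update (P ω) i 0))⁻¹ ∂μ ≤ (m : ℝ)) :
    ∑ j ∈ H0, ∫⁻ v, ENNReal.ofReal (weightedLevel q what j v) ∂Measure.pi ν ≤
      ENNReal.ofReal q := by
  simp only [lintegral_weightedLevel_map hq hw_pos hw_mono hP hP0 hlaw]
  rw [← ENNReal.ofReal_sum_of_nonneg fun j _ => mul_nonneg (by positivity)
    (integral_nonneg fun _ => (inv_pos.mpr (hw_pos _ _)).le), ← mul_sum]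
  refine ENNReal.ofReal_le_ofReal ?_
  rcases m.eq_zero_or_pos with rfl | hm
  · simp [hq]
  exact (mul_le_mul_of_nonneg_left hw_cond (by positivity)).trans_eq
    (div_mul_cancel₀ q (by positivity))

end SelfConsistent

theorem fdr_control_self_consistent_general
    {Ω : Type*} [MeasurableSpace Ω] (μ : Measure Ω) [IsProbabilityMeasure μ]
    (m : ℕ) (q : ℝ) (hq : 0 < q)
    (p : Fin m → Ω → ℝ) (hmeas : ∀ i, Measurable (p i))
    (hrange : ∀ i ω, p i ω ∈ Set.Icc (0:ℝ) 1)
    (hindep : iIndepFun p μ)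
    (H0 : Finset (Fin m))
    (hnull : ∀ j ∈ H0, ∀ t ∈ Set.Icc (0:ℝ) 1, μ {ω | p j ω ≤ t} ≤ ENNReal.ofReal t)
    (what : Fin m → (Fin m → ℝ) → ℝ)
    (hw_pos : ∀ i v, 0 < what i v)
    (hw_mono : ∀ i, Monotone (what i))
    (hw_cond : ∑ i ∈ H0,
        ∫ ω, (what i (Function.update (fun j => p j ω) i 0))⁻¹ ∂μ ≤ (m : ℝ))
    (Ustar : (Fin m → ℝ) → Finset (Fin m))
    (hSC : ∀ v : Fin m → ℝ, ∀ i ∈ Ustar v,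
        v i ≤ q * ((Ustar v).card : ℝ) / ((m : ℝ) * what i v))
    (hUanti : ∀ v₁ v₂ : Fin m → ℝ, v₁ ≤ v₂ → (Ustar v₂).card ≤ (Ustar v₁).card) :
    ∫ ω, ((Ustar (fun j => p j ω) ∩ H0).card : ℝ)
        / max ((Ustar (fun j => p j ω)).card : ℝ) 1 ∂μ ≤ q := by
  set P : Ω → Fin m → ℝ := fun ω j => p j ω
  have hP : Measurable P := measurable_pi_lambda _ hmeas
  set ν : Fin m → Measure ℝ := fun i => μ.map (p i)
  have : ∀ i, IsProbabilityMeasure (ν i) := fun i =>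
    Measure.isProbabilityMeasure_map (hmeas i).aemeasurable
  have hlaw : μ.map P = Measure.pi ν := hindep.map_fun_eq_pi_map fun i => (hmeas i).aemeasurable
  have hterm j : AEMeasurable (fun v => ENNReal.ofReal
      (brTerm (weightedLevel q what j v) (Ustar v).card (v j))) (μ.map P) :=
    hlaw ▸ (aemeasurable_brTerm_weightedLevel ν hq.le hw_pos hw_mono hUanti j).ennreal_ofReal
  rw [← ENNReal.ofReal_le_ofReal_iff hq.le]
  calc ENNReal.ofReal (∫ ω, ((Ustar (P ω) ∩ H0).card : ℝ) / max ((Ustar (P ω)).card : ℝ) 1 ∂μ)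
      ≤ ∫⁻ ω, ∑ j ∈ H0, ENNReal.ofReal
          (brTerm (weightedLevel q what j (P ω)) (Ustar (P ω)).card (P ω j)) ∂μ := by
        refine (ofReal_integral_le_lintegral_ofReal fun ω => by positivity).trans <|
          lintegral_mono fun ω => ?_
        rw [← ENNReal.ofReal_sum_of_nonneg fun j _ => brTerm_nonneg _ _ _]
        exact ENNReal.ofReal_le_ofReal
          (fdp_le_sum_brTerm hq.le hw_pos hw_mono hSC H0 fun i => (hrange i ω).1)
    _ = ∑ j ∈ H0, ∫⁻ v, ENNReal.ofReal
          (brTerm (weightedLevel q what j v) (Ustar v).card (v j)) ∂Measure.pi ν := by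
        rw [← hlaw]
        exact (lintegral_finsetSum' H0 fun j _ => (hterm j).comp_aemeasurable hP.aemeasurable).trans
          (sum_congr rfl fun j _ => (lintegral_map' (hterm j) hP.aemeasurable).symm)
    _ ≤ ∑ j ∈ H0, ∫⁻ v, ENNReal.ofReal (weightedLevel q what j v) ∂Measure.pi ν :=
        sum_le_sum fun j hj => lintegral_brTerm_weightedLevel_le ν
          (measure_Iic_le_ofReal_of_Icc fun t ht =>
            (Measure.map_apply (hmeas j) measurableSet_Iic).trans_le (hnull j hj t ht))
          hq.le hw_pos hUanti
    _ ≤ ENNReal.ofReal q :=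
        sum_lintegral_weightedLevel_le hq.le hw_pos hw_mono hP (fun ω i => (hrange i ω).1) hlaw
          H0 hw_cond

/-- FDR control for self-consistent multiple testing procedures with data-adaptive
weights (Lemma B1): under independent superuniform null p-values, coordinate-wise
nondecreasing weight functions satisfying `Σ_{i∈H0} E[1/ŵ_i(p_{0,i})] ≤ m`,
self-consistency `p_i ≤ q|U*(p)|/(m ŵ_i(p))` for all `i ∈ U*(p)`, and
coordinate-wise nonincreasing `p ↦ |U*(p)|`, the FDR is at most `q`. -/
theorem fdr_control_self_consistent
    {Ω : Type*} [MeasurableSpace Ω] (μ : Measure Ω) [IsProbabilityMeasure μ]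
    (m : ℕ) (hm : 0 < m) (q : ℝ) (hq : 0 < q)
    (p : Fin m → Ω → ℝ) (hmeas : ∀ i, Measurable (p i))
    (hrange : ∀ i ω, p i ω ∈ Set.Icc (0:ℝ) 1)
    (hindep : iIndepFun p μ)
    (H0 : Finset (Fin m))
    (hnull : ∀ j ∈ H0, ∀ t ∈ Set.Icc (0:ℝ) 1, μ {ω | p j ω ≤ t} ≤ ENNReal.ofReal t)
    (what : Fin m → (Fin m → ℝ) → ℝ)
    (hw_pos : ∀ i v, 0 < what i v)
    (hw_mono : ∀ i, Monotone (what i))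
    (hw_cond : ∑ i ∈ H0,
        ∫ ω, (what i (Function.update (fun j => p j ω) i 0))⁻¹ ∂μ ≤ (m : ℝ))
    (Ustar : (Fin m → ℝ) → Finset (Fin m))
    (hSC : ∀ v : Fin m → ℝ, ∀ i ∈ Ustar v,
        v i ≤ q * ((Ustar v).card : ℝ) / ((m : ℝ) * what i v))
    (hUanti : ∀ v₁ v₂ : Fin m → ℝ, v₁ ≤ v₂ → (Ustar v₂).card ≤ (Ustar v₁).card) :
    ∫ ω, ((Ustar (fun j => p j ω) ∩ H0).card : ℝ)
        / max ((Ustar (fun j => p j ω)).card : ℝ) 1 ∂μ ≤ q :=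
  fdr_control_self_consistent_general μ m q hq p hmeas hrange hindep H0 hnull what hw_pos hw_mono
    hw_cond Ustar hSC hUanti
end

section
/- For the Weighted Focused BH procedure with a monotonic filter F and coordinate-wise nondecreasing weight functions ŵ_i, the map p ↦ |U*(p)| (the size of the filtered rejection set) is coordinate-wise nonincreasing: if p^1 ≤ p^2 componentwise, then |F({j: ŵ_j(p^1) p^1_j ≤ t*_1}, p^1)| ≥ |F({j: ŵ_j(p^2) p^2_j ≤ t*_2}, p^2)|, where t*_k is the WFBH threshold computed from p^k. -/
open Finset
open scoped Classical

/-- For WFBH with a monotonic filter and coordinate-wise nondecreasing weight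
functions, the size of the filtered rejection set is coordinate-wise nonincreasing
in the p-value vector: if `p¹ ≤ p²` componentwise and `t*_k` is the WFBH threshold
computed from `p^k`, then
`|F({j : ŵ_j(p²)p²_j ≤ t*_2}, p²)| ≤ |F({j : ŵ_j(p¹)p¹_j ≤ t*_1}, p¹)|`. -/
theorem wfbh_card_antitone
    (m : ℕ) (hm : 0 < m) (q : ℝ) (hq : 0 < q)
    (what : Fin m → (Fin m → ℝ) → ℝ)
    (hw_pos : ∀ i v, 0 < what i v)
    (hw_mono : ∀ i, Monotone (what i))
    (F : Finset (Fin m) → (Fin m → ℝ) → Finset (Fin m))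
    (hF_sub : ∀ R v, F R v ⊆ R)
    (hF_mono : ∀ (v₁ v₂ : Fin m → ℝ) (R₁ R₂ : Finset (Fin m)),
        v₁ ≤ v₂ → R₂ ⊆ R₁ → (F R₂ v₂).card ≤ (F R₁ v₁).card)
    (p₁ p₂ : Fin m → ℝ) (hp : p₁ ≤ p₂)
    (t₁ t₂ : ℝ)
    (ht₁ : IsGreatest {t : ℝ |
        (t = 0 ∨ ∃ i, t = what i p₁ * p₁ i) ∧
        (m : ℝ) * t ≤ q * ((F (univ.filter fun j => what j p₁ * p₁ j ≤ t) p₁).card : ℝ)} t₁)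
    (ht₂ : IsGreatest {t : ℝ |
        (t = 0 ∨ ∃ i, t = what i p₂ * p₂ i) ∧
        (m : ℝ) * t ≤ q * ((F (univ.filter fun j => what j p₂ * p₂ j ≤ t) p₂).card : ℝ)} t₂) :
    (F (univ.filter fun j => what j p₂ * p₂ j ≤ t₂) p₂).card ≤
      (F (univ.filter fun j => what j p₁ * p₁ j ≤ t₁) p₁).card := by
  -- t₂ ≥ 0 since 0 is feasible
  have ht₂0 : (0 : ℝ) ≤ t₂ := by
    apply ht₂.2
    refine ⟨Or.inl rfl, ?_⟩
    simp only [mul_zero]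
    positivity
  -- key pointwise comparison
  have hkey : ∀ j : Fin m, what j p₂ * p₂ j ≤ t₂ → what j p₁ * p₁ j ≤ t₂ := by
    intro j hj
    rcases le_or_gt (p₁ j) 0 with h0 | h0
    · exact le_trans (mul_nonpos_of_nonneg_of_nonpos (hw_pos j p₁).le h0) ht₂0
    · exact le_trans (mul_le_mul (hw_mono j hp) (hp j) h0.le (hw_pos j p₂).le) hj
  -- candidate set for p₁ below t₂
  set C : Finset ℝ := insert 0 ((univ.filter fun i => what i p₁ * p₁ i ≤ t₂).image
      fun i => what i p₁ * p₁ i) with hC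
  have hCne : C.Nonempty := ⟨0, mem_insert_self _ _⟩
  set t' : ℝ := C.max' hCne with ht'
  have ht'le : t' ≤ t₂ := by
    apply Finset.max'_le
    intro y hy
    rcases mem_insert.1 hy with rfl | hy
    · exact ht₂0
    · obtain ⟨i, hi, rfl⟩ := mem_image.1 hy
      exact (mem_filter.1 hi).2
  have ht'cand : t' = 0 ∨ ∃ i, t' = what i p₁ * p₁ i := by
    have := C.max'_mem hCne
    rcases mem_insert.1 this with h | h
    · exact Or.inl h
    · obtain ⟨i, _, hi⟩ := mem_image.1 h
      exact Or.inr ⟨i, hi.symm⟩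
  -- the rejection sets at t' and t₂ (for p₁) coincide
  have hsets : (univ.filter fun j => what j p₁ * p₁ j ≤ t') =
      (univ.filter fun j => what j p₁ * p₁ j ≤ t₂) := by
    ext j
    simp only [mem_filter, mem_univ, true_and]
    constructor
    · exact fun h => le_trans h ht'le
    · intro h
      exact Finset.le_max' C _ (mem_insert_of_mem (mem_image.2
        ⟨j, mem_filter.2 ⟨mem_univ j, h⟩, rfl⟩))
  -- R₂(t₂) ⊆ R₁(t₂)
  have hsub : (univ.filter fun j => what j p₂ * p₂ j ≤ t₂) ⊆
      (univ.filter fun j => what j p₁ * p₁ j ≤ t₂) := by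
    intro j hj
    simp only [mem_filter, mem_univ, true_and] at hj ⊢
    exact hkey j hj
  have hcard2 : (F (univ.filter fun j => what j p₂ * p₂ j ≤ t₂) p₂).card ≤
      (F (univ.filter fun j => what j p₁ * p₁ j ≤ t₂) p₁).card :=
    hF_mono p₁ p₂ _ _ hp hsub
  -- t' is feasible for p₁
  have ht'feas : t' ∈ {t : ℝ |
      (t = 0 ∨ ∃ i, t = what i p₁ * p₁ i) ∧
      (m : ℝ) * t ≤ q * ((F (univ.filter fun j => what j p₁ * p₁ j ≤ t) p₁).card : ℝ)} := by
    refine ⟨ht'cand, ?_⟩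
    rw [hsets]
    calc (m : ℝ) * t' ≤ (m : ℝ) * t₂ := by
          exact mul_le_mul_of_nonneg_left ht'le (Nat.cast_nonneg m)
      _ ≤ q * ((F (univ.filter fun j => what j p₂ * p₂ j ≤ t₂) p₂).card : ℝ) := ht₂.1.2
      _ ≤ q * ((F (univ.filter fun j => what j p₁ * p₁ j ≤ t₂) p₁).card : ℝ) := by
          exact mul_le_mul_of_nonneg_left (Nat.cast_le.2 hcard2) hq.le
  have ht'le₁ : t' ≤ t₁ := ht₁.2 ht'feas
  -- conclude
  calc (F (univ.filter fun j => what j p₂ * p₂ j ≤ t₂) p₂).card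
      ≤ (F (univ.filter fun j => what j p₁ * p₁ j ≤ t₂) p₁).card := hcard2
    _ = (F (univ.filter fun j => what j p₁ * p₁ j ≤ t') p₁).card := by rw [hsets]
    _ ≤ (F (univ.filter fun j => what j p₁ * p₁ j ≤ t₁) p₁).card := by
        refine hF_mono p₁ p₁ _ _ le_rfl ?_
        intro j hj
        simp only [mem_filter, mem_univ, true_and] at hj ⊢
        exact le_trans hj ht'le₁
end

section
/- If the DAG is a rooted tree, the outer nodes filter F_out, mapping a rejection set R to {j ∈ R : no descendant of j is in R}, is monotonic: R^1 ⊇ R^2 implies |F_out(R^1)| ≥ |F_out(R^2)|. -/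
open Finset
open scoped Classical

private lemma tree_comparable {m : ℕ} (par : Fin m → Option (Fin m))
    {j₁ j₂ d : Fin m}
    (h1 : Relation.ReflTransGen (fun a b => par b = some a) j₁ d)
    (h2 : Relation.ReflTransGen (fun a b => par b = some a) j₂ d) :
    Relation.ReflTransGen (fun a b => par b = some a) j₁ j₂ ∨
    Relation.ReflTransGen (fun a b => par b = some a) j₂ j₁ := by
  induction h1 with
  | refl => right; exact h2
  | @tail b c hb hbc ih =>
    rcases h2.cases_tail with rfl | ⟨e, he, hec⟩
    · left; exact hb.tail hbc
    · have : e = b := by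
        have := hbc.symm.trans hec
        exact Option.some_injective _ this.symm
      subst this
      exact ih he

/-- On a rooted tree (each non-root node has exactly one parent, encoded by a parent
function `par : Fin m → Option (Fin m)`, with acyclicity of the descendant relation),
the outer nodes filter `F_out(R) = {j ∈ R : no descendant of j is in R}` is monotonic:
`R² ⊆ R¹` implies `|F_out(R²)| ≤ |F_out(R¹)|`. Here `d` is a descendant of `j` iff
`Relation.TransGen childOf j d`, where `childOf a b ↔ par b = some a`. -/
theorem outer_nodes_filter_monotonic_on_tree
    (m : ℕ) (par : Fin m → Option (Fin m))
    (hacyclic : ∀ j, ¬ Relation.TransGen (fun a b => par b = some a) j j)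
    (Fout : Finset (Fin m) → Finset (Fin m))
    (hFout : ∀ R, Fout R =
      R.filter fun j => ∀ d, Relation.TransGen (fun a b => par b = some a) j d → d ∉ R) :
    ∀ R₁ R₂ : Finset (Fin m), R₂ ⊆ R₁ → (Fout R₂).card ≤ (Fout R₁).card := by
  intro R₁ R₂ hsub
  set c : Fin m → Fin m → Prop := fun a b => par b = some a with hc
  -- the "descendant of" relation is well-founded
  have hwf : WellFounded (fun a b : Fin m => Relation.TransGen c b a) := by
    have : IsTrans (Fin m) (fun a b : Fin m => Relation.TransGen c b a) :=
      ⟨fun a b c hab hbc => hbc.trans hab⟩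
    have : IsIrrefl (Fin m) (fun a b : Fin m => Relation.TransGen c b a) :=
      ⟨fun a h => hacyclic a h⟩
    exact Finite.wellFounded_of_trans_of_irrefl _
  -- existence: every j ∈ R₁ has a refl-trans descendant in Fout R₁
  have hex : ∀ j : Fin m, j ∈ R₁ →
      ∃ d, Relation.ReflTransGen c j d ∧ d ∈ Fout R₁ := by
    intro j
    induction j using WellFounded.induction hwf with
    | _ j ih =>
      intro hj
      by_cases hout : ∀ d, Relation.TransGen c j d → d ∉ R₁
      · exact ⟨j, Relation.ReflTransGen.refl, by
          rw [hFout]; exact Finset.mem_filter.mpr ⟨hj, hout⟩⟩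
      · push_neg at hout
        obtain ⟨d, hjd, hdR⟩ := hout
        obtain ⟨e, hde, heF⟩ := ih d hjd hdR
        exact ⟨e, (hjd.to_reflTransGen).trans hde, heF⟩
  choose! f hf1 hf2 using hex
  have hsubF : Fout R₂ ⊆ R₁ := by
    intro j hj
    rw [hFout] at hj
    exact hsub (Finset.mem_filter.mp hj).1
  apply Finset.card_le_card_of_injOn (fun j => f j)
  · intro j hj
    exact hf2 j (hsubF hj)
  · intro j₁ h₁ j₂ h₂ hfe
    have d1 := hf1 j₁ (hsubF h₁)
    have d2 := hf1 j₂ (hsubF h₂)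
    simp only at hfe
    rw [hfe] at d1
    rw [hFout] at h₁ h₂
    obtain ⟨h₁R, h₁out⟩ := Finset.mem_filter.mp h₁
    obtain ⟨h₂R, h₂out⟩ := Finset.mem_filter.mp h₂
    rcases tree_comparable par d1 d2 with h | h
    · rcases (Relation.reflTransGen_iff_eq_or_transGen.mp h) with rfl | htg
      · rfl
      · exact absurd h₂R (h₁out j₂ htg)
    · rcases (Relation.reflTransGen_iff_eq_or_transGen.mp h) with rfl | htg
      · rfl
      · exact absurd h₁R (h₂out j₁ htg)
end

section
/- There exists a DAG (not a tree) and rejection sets R^2 ⊆ R^1 such that |F_out(R^1)| < |F_out(R^2)|, i.e., the outer nodes filter is not monotonic on general DAGs. -/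
open Finset
open scoped Classical

def myChild (x y : Fin 3) : Prop := (x = 0 ∨ x = 1) ∧ y = 2

lemma myChild_trans : ∀ x y, Relation.TransGen myChild x y → myChild x y := by
  intro x y h
  induction h with
  | single h => exact h
  | tail _ h2 ih =>
    exact absurd ih.2 (by rcases h2.1 with h | h <;> simp [h] <;> omega)

/-- The outer nodes filter is not monotonic on general DAGs: there is a DAG
(a `child` relation on three nodes whose transitive closure is acyclic, but which is
not a tree since some node has two distinct parents) and rejection sets `R² ⊆ R¹`
with `|F_out(R¹)| < |F_out(R²)|`, where
`F_out(R) = {j ∈ R : no descendant of j is in R}`. -/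
theorem outer_nodes_filter_not_monotonic_on_dag :
    ∃ (child : Fin 3 → Fin 3 → Prop) (R₁ R₂ : Finset (Fin 3)),
      (∀ j, ¬ Relation.TransGen child j j) ∧
      (∃ b a a', a ≠ a' ∧ child a b ∧ child a' b) ∧
      R₂ ⊆ R₁ ∧
      (R₁.filter fun j => ∀ d, Relation.TransGen child j d → d ∉ R₁).card <
        (R₂.filter fun j => ∀ d, Relation.TransGen child j d → d ∉ R₂).card := by
  refine ⟨myChild, {0, 1, 2}, {0, 1}, ?_, ⟨2, 0, 1, by decide, by simp [myChild], by simp [myChild]⟩, by decide, ?_⟩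
  · intro j h
    have := myChild_trans _ _ h
    rcases this.1 with h | h <;> rw [h] at this <;> exact absurd this.2 (by decide)
  · have key : ∀ (R : Finset (Fin 3)),
        R.filter (fun j => ∀ d, Relation.TransGen myChild j d → d ∉ R)
        = R.filter (fun j => ∀ d, myChild j d → d ∉ R) := by
      intro R
      apply Finset.filter_congr
      intro j _
      constructor
      · intro h d hd; exact h d (Relation.TransGen.single hd)
      · intro h d hd; exact h d (myChild_trans _ _ hd)
    rw [key, key]
    have h1 : ({0, 1, 2} : Finset (Fin 3)).filter (fun j => ∀ d, myChild j d → d ∉ ({0,1,2} : Finset (Fin 3))) = {2} := by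
      ext j; fin_cases j <;> simp [myChild]
    have h2 : ({0, 1} : Finset (Fin 3)).filter (fun j => ∀ d, myChild j d → d ∉ ({0,1} : Finset (Fin 3))) = {0, 1} := by
      ext j; fin_cases j <;> simp [myChild] <;> decide
    rw [h1, h2]; decide
end

section
/- Let p_1,…,p_m be independent random variables in [0,1] with P(p_j ≤ t) ≤ t for j in a subset G of null indices, and let f:[0,1]^m → [0,∞) be coordinate-wise nonincreasing. If T is Simes' combining function applied to the p-values with indices in G, then E[ 1{T(p_G) ≤ f(p)} / f(p) ] ≤ 1. -/
open MeasureTheory ProbabilityTheory Finset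
open scoped Classical

/-- Simes' combining function applied to the p-values with indices in `G`:
`T(p_G) = min_{1≤k≤n} (n/k)·p_{(k)}`, expressed equivalently as
`min_{i∈G} (n / r_i)·p_i` where `r_i = |{j ∈ G : p_j ≤ p_i}|` is the rank of `p_i`. -/
noncomputable def simes {m : ℕ} (G : Finset (Fin m)) (hG : G.Nonempty)
    (v : Fin m → ℝ) : ℝ :=
  G.inf' hG fun i => (G.card : ℝ) / ((G.filter fun j => v j ≤ v i).card : ℝ) * v i

open Set
open scoped ENNReal

/-!
For `c = f(p) > 0` with `T(p_G) ≤ c`, let `R` be the number of rejections of the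
Benjamini–Hochberg procedure at level `c` on `p_G` and `τ = R c / n` its threshold (`n = #G`).
Then `1 / c = R / (n τ) ≤ #{j ∈ G | p_j ≤ τ} / (n τ)`, so the integrand is at most
`n⁻¹ ∑_{j ∈ G} 1{p_j ≤ τ} / τ`. As `τ` is a nonincreasing function of `p`, integrating first in
the coordinate `j` (independence) reduces each term to the one-dimensional bound
`E[1{X ≤ h X} / h X] ≤ 1` for superuniform `X` and nonincreasing `h`: with
`t₀ = sup {x | x ≤ h x}`, the event lies in `{X ≤ t₀}` and `h X ≥ t₀` on it.

Since `f` is only assumed antitone, Fubini needs that antitone functions on `ℝᵏ` are a.e.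
measurable for every product measure. This holds because lower sets are null-measurable: by
induction on `k`, a lower set agrees up to a null set with the set built from its sections at the
rationals and at the countably many points where the section jumps by positive measure.
-/

theorem Fin.insertNth_mono {n : ℕ} {α : Type*} [Preorder α] (i : Fin (n + 1)) {x x' : α}
    {y y' : Fin n → α} (hx : x ≤ x') (hy : y ≤ y') :
    i.insertNth (α := fun _ => α) x y ≤ i.insertNth x' y' :=
  Fin.insertNth_le_iff.2 ⟨by simpa using hx, fun j => by simpa using hy j⟩

/-- When `L x ⊆ U x` are measurable inner and outer approximations of the sections of a set
with antitone sections, the part of the section at `x` that the rational sections leave open. -/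
def sectionGap {Y : Type*} (L U : ℝ → Set Y) (x : ℝ) : Set Y :=
  (⋂ (q : ℚ) (_ : (q : ℝ) < x), U q) \ ⋃ (q : ℚ) (_ : x < q), L q

theorem countable_setOf_measure_sectionGap_pos {Y : Type*} [MeasurableSpace Y] {ν : Measure Y}
    [SFinite ν] {L U : ℝ → Set Y} (hL : ∀ x, MeasurableSet (L x))
    (hU : ∀ x, MeasurableSet (U x)) (hUL : ∀ x, ν (U x \ L x) = 0) :
    {x | 0 < ν (sectionGap L U x)}.Countable := by
  refine Measure.countable_meas_pos_of_disjoint_iUnion₀ (fun x => ?_) fun x x' hne => ?_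
  · exact ((MeasurableSet.iInter fun q : ℚ => .iInter fun _ => hU q).diff
      (.iUnion fun q : ℚ => .iUnion fun _ => hL q)).nullMeasurableSet
  wlog hlt : x < x' generalizing x x'
  · exact (this x' x hne.symm (hne.lt_or_gt.resolve_left hlt)).symm
  obtain ⟨q, hxq, hqx'⟩ := exists_rat_btwn hlt
  refine measure_mono_null (t := U q \ L q) ?_ (hUL q)
  rintro y ⟨⟨-, hy⟩, hy', -⟩
  exact ⟨mem_iInter₂.1 hy' q hqx', fun hyL => hy (mem_iUnion₂.2 ⟨q, hxq, hyL⟩)⟩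

theorem nullMeasurableSet_prod_of_sandwich {α β : Type*} [MeasurableSpace α] [MeasurableSpace β]
    {μ : Measure α} {ν : Measure β} [SFinite ν] {t s u : Set (α × β)} (ht : MeasurableSet t)
    (hu : MeasurableSet u) (hts : t ⊆ s) (hsu : s ⊆ u)
    (hnull : ∀ x, ν (Prod.mk x ⁻¹' (u \ t)) = 0) : NullMeasurableSet s (μ.prod ν) := by
  have h : μ.prod ν (u \ t) = 0 := by
    rw [Measure.prod_apply (hu.diff ht)]
    exact (lintegral_congr hnull).trans lintegral_zero
  exact ht.nullMeasurableSet.congr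
    (hts.eventuallyLE.antisymm (ae_le_set.2 (measure_mono_null (sdiff_subset_sdiff_left hsu) h)))

theorem nullMeasurableSet_prod_of_antitone_sections {Y : Type*} [MeasurableSpace Y]
    {μ : Measure ℝ} {ν : Measure Y} [SFinite ν] {s : Set (ℝ × Y)}
    (hanti : Antitone fun x => Prod.mk x ⁻¹' s)
    (hsec : ∀ x, NullMeasurableSet (Prod.mk x ⁻¹' s) ν) :
    NullMeasurableSet s (μ.prod ν) := by
  choose L hLs hL hLae using fun x => (hsec x).exists_measurable_subset_ae_eq
  set U : ℝ → Set Y := fun x => toMeasurable ν (Prod.mk x ⁻¹' s)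
  have hU : ∀ x, MeasurableSet (U x) := fun x => measurableSet_toMeasurable _ _
  have hUL : ∀ x, ν (U x \ L x) = 0 := fun x =>
    ae_le_set.1 (((hsec x).toMeasurable_ae_eq).trans (hLae x).symm).le
  -- Off the countably many `x` with a non-null gap, the rational sections determine `s`.
  set D : Set ℝ := range ((↑) : ℚ → ℝ) ∪ {x | 0 < ν (sectionGap L U x)}
  have hD : D.Countable :=
    (countable_range _).union (countable_setOf_measure_sectionGap_pos hL hU hUL)
  refine nullMeasurableSet_prod_of_sandwich (t := ⋃ d ∈ D, Iic d ×ˢ L d)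
    (u := ⋂ d ∈ D, Prod.fst ⁻¹' Iio d ∪ Prod.snd ⁻¹' U d)
    (.biUnion hD fun d _ => measurableSet_Iic.prod (hL d))
    (.biInter hD fun d _ => (measurable_fst measurableSet_Iio).union (measurable_snd (hU d)))
    ?_ ?_ fun x => ?_
  · simp only [iUnion_subset_iff]
    rintro d - ⟨x, y⟩ ⟨hxd, hy⟩
    exact hanti (mem_Iic.1 hxd) (hLs d hy)
  · simp only [subset_iInter_iff]
    intro d _ ⟨x, y⟩ hxy
    by_cases hdx : x < d
    · exact Or.inl hdx
    · exact Or.inr (subset_toMeasurable _ _ (hanti (not_lt.1 hdx) hxy))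
  by_cases hx : x ∈ D
  · refine measure_mono_null (t := U x \ L x) ?_ (hUL x)
    rintro y ⟨hy, hy'⟩
    refine ⟨(mem_iInter₂.1 hy x hx).resolve_left (lt_irrefl x), fun hyL => hy' ?_⟩
    exact mem_iUnion₂.2 ⟨x, hx, self_mem_Iic, hyL⟩
  · refine measure_mono_null (t := sectionGap L U x) ?_
      (nonpos_iff_eq_zero.1 (not_lt.1 fun h => hx (Or.inr h)))
    rintro y ⟨hy, hy'⟩
    refine ⟨mem_iInter₂.2 fun q hq => ?_, fun hyL => ?_⟩
    · exact (mem_iInter₂.1 hy q (Or.inl (mem_range_self q))).resolve_left (not_lt.2 hq.le)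
    · obtain ⟨q, hxq, hyq⟩ := mem_iUnion₂.1 hyL
      exact hy' (mem_iUnion₂.2 ⟨q, Or.inl (mem_range_self q), hxq.le, hyq⟩)

theorem IsLowerSet.nullMeasurableSet_pi {k : ℕ} (π : Fin k → Measure ℝ)
    [∀ i, SigmaFinite (π i)] {s : Set (Fin k → ℝ)} (hs : IsLowerSet s) :
    NullMeasurableSet s (Measure.pi π) := by
  induction k with
  | zero => exact NullMeasurableSet.of_subsingleton
  | succ k ih =>
    set e := MeasurableEquiv.piFinSuccAbove (fun _ : Fin (k + 1) => ℝ) 0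
    have he : MeasurePreserving e _ _ := measurePreserving_piFinSuccAbove π 0
    have hsec : NullMeasurableSet (e.symm ⁻¹' s)
        ((π 0).prod (Measure.pi fun i => π (Fin.succAbove 0 i))) := by
      refine nullMeasurableSet_prod_of_antitone_sections (fun x x' hxx' y hy => ?_) fun x => ?_
      · exact hs (Fin.insertNth_mono 0 hxx' le_rfl) hy
      · exact ih _ fun y y' hyy' hy => hs (Fin.insertNth_mono 0 le_rfl hyy') hy
    exact e.symm.symm_preimage_preimage s ▸ hsec.preimage he.quasiMeasurePreserving

theorem Antitone.aemeasurable_pi {k : ℕ} (π : Fin k → Measure ℝ) [∀ i, SigmaFinite (π i)]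
    {f : (Fin k → ℝ) → ℝ} (hf : Antitone f) : AEMeasurable f (Measure.pi π) :=
  NullMeasurable.aemeasurable <| measurable_of_Ioi fun _ =>
    IsLowerSet.nullMeasurableSet_pi π fun _ _ hvw hv => lt_of_lt_of_le hv (hf hvw)

theorem lintegral_ite_le_inv_le_one {ν : Measure ℝ}
    (hν : ∀ t, ν (Iic t) ≤ ENNReal.ofReal t) {h : ℝ → ℝ} (hh : Antitone h) :
    ∫⁻ x, (if x ≤ h x then (ENNReal.ofReal (h x))⁻¹ else 0) ∂ν ≤ 1 := by
  set t₀ := sSup {x | x ≤ h x}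
  have ht₀ : ∀ x, x ≤ h x → x ≤ t₀ ∧ t₀ ≤ h x := by
    intro x hx
    have hbound : ∀ t ∈ {x | x ≤ h x}, t ≤ h x := fun t ht =>
      (le_total t x).elim (fun htx => htx.trans hx) fun hxt => ht.trans (hh hxt)
    exact ⟨le_csSup ⟨h x, hbound⟩ hx, csSup_le ⟨x, hx⟩ hbound⟩
  calc ∫⁻ x, (if x ≤ h x then (ENNReal.ofReal (h x))⁻¹ else 0) ∂ν
      ≤ ∫⁻ x, (Iic t₀).indicator (fun _ => (ENNReal.ofReal t₀)⁻¹) x ∂ν := by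
        refine lintegral_mono fun x => ?_
        split_ifs with hx
        · rw [Set.indicator_of_mem (Set.mem_Iic.2 (ht₀ x hx).1)]
          exact ENNReal.inv_le_inv.2 (ENNReal.ofReal_le_ofReal (ht₀ x hx).2)
        · exact bot_le
    _ = (ENNReal.ofReal t₀)⁻¹ * ν (Iic t₀) := lintegral_indicator_const measurableSet_Iic _
    _ ≤ (ENNReal.ofReal t₀)⁻¹ * ENNReal.ofReal t₀ := by gcongr; exact hν t₀
    _ ≤ 1 := ENNReal.inv_mul_le_one _

theorem lintegral_pi_ite_le_inv_le_one {m : ℕ} (π : Fin m → Measure ℝ)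
    [∀ i, IsProbabilityMeasure (π i)] (j : Fin m) (hj : ∀ t, π j (Iic t) ≤ ENNReal.ofReal t)
    {g : (Fin m → ℝ) → ℝ} (hg : Antitone g) :
    ∫⁻ v, (if v j ≤ g v then (ENNReal.ofReal (g v))⁻¹ else 0) ∂Measure.pi π ≤ 1 := by
  obtain ⟨k, rfl⟩ := Nat.exists_eq_add_one.2 j.pos
  set F : (Fin (k + 1) → ℝ) → ℝ≥0∞ := fun v =>
    if v j ≤ g v then (ENNReal.ofReal (g v))⁻¹ else 0
  set e := (MeasurableEquiv.piFinSuccAbove (fun _ => ℝ) j).trans MeasurableEquiv.prodComm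
  have he : MeasurePreserving e (Measure.pi π)
      ((Measure.pi fun i => π (j.succAbove i)).prod (π j)) :=
    Measure.measurePreserving_swap.comp (measurePreserving_piFinSuccAbove π j)
  calc ∫⁻ v, F v ∂Measure.pi π
      = ∫⁻ z, F (e.symm z) ∂(Measure.pi fun i => π (j.succAbove i)).prod (π j) :=
        ((he.symm e).lintegral_comp_emb e.symm.measurableEmbedding F).symm
    _ ≤ ∫⁻ y, ∫⁻ x, F (e.symm (y, x)) ∂π j ∂Measure.pi fun i => π (j.succAbove i) :=
        lintegral_prod_le _
    _ ≤ ∫⁻ _, 1 ∂Measure.pi fun i => π (j.succAbove i) := by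
        refine lintegral_mono fun y => ?_
        have := lintegral_ite_le_inv_le_one hj (h := fun x => g (j.insertNth x y))
          fun x x' hxx' => hg (Fin.insertNth_mono j hxx' le_rfl)
        change ∫⁻ x, F (j.insertNth x y) ∂π j ≤ 1
        simpa [F] using this
    _ = 1 := by simp

theorem Finset.measurable_inf' {α δ ι : Type*} [MeasurableSpace α] [MeasurableSpace δ]
    [SemilatticeInf α] [MeasurableInf₂ α] {s : Finset ι} (hs : s.Nonempty)
    {f : ι → δ → α} (hf : ∀ i ∈ s, Measurable (f i)) : Measurable (s.inf' hs f) :=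
  Finset.inf'_induction hs _ (fun _ hf _ hg => hf.inf hg) hf

theorem measurable_simes {m : ℕ} (G : Finset (Fin m)) (hG : G.Nonempty) :
    Measurable (simes G hG) := by
  have hrank (i : Fin m) :
      Measurable fun v : Fin m → ℝ => (#{j ∈ G | v j ≤ v i} : ℝ) := by
    simp_rw [Finset.natCast_card_filter]
    exact Finset.measurable_sum _ fun j _ => Measurable.ite
      (measurableSet_le (measurable_pi_apply j) (measurable_pi_apply i)) measurable_const
      measurable_const
  have : simes G hG = G.inf' hG fun i v => (#G : ℝ) / #{j ∈ G | v j ≤ v i} * v i := by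
    ext v
    simp [simes, Finset.inf'_apply]
  rw [this]
  exact Finset.measurable_inf' hG fun i _ =>
    (measurable_const.div (hrank i)).mul (measurable_pi_apply i)

theorem aemeasurable_ite_simes_le {m : ℕ} {μ : Measure (Fin m → ℝ)} (G : Finset (Fin m))
    (hG : G.Nonempty) {f : (Fin m → ℝ) → ℝ} (hf : AEMeasurable f μ) :
    AEMeasurable (fun v => if simes G hG v ≤ f v then (f v)⁻¹ else 0) μ :=
  (Measurable.ite (measurableSet_le measurable_fst measurable_snd) measurable_snd.inv
    measurable_const).comp_aemeasurable ((measurable_simes G hG).aemeasurable.prodMk hf)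

section bhThreshold

variable {ι : Type*} (G : Finset ι)

/-- The Benjamini–Hochberg threshold `R c / n` at level `c` (with `n = #G`), where `R` is the
largest `k ≤ n` such that at least `k` of the `v j`, `j ∈ G`, lie below `k c / n`. -/
noncomputable def bhThreshold (c : ℝ) (v : ι → ℝ) : ℝ :=
  (range (#G + 1)).sup' nonempty_range_add_one fun k =>
    if k ≤ #{j ∈ G | v j ≤ k * c / #G} then k * c / #G else 0

theorem bhThreshold_nonneg (c : ℝ) (v : ι → ℝ) : 0 ≤ bhThreshold G c v :=
  le_sup'_of_le _ (mem_range.2 (Nat.succ_pos _)) (by simp)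

theorem bhThreshold_anti {c c' : ℝ} {v v' : ι → ℝ} (hc : c' ≤ c) (hv : v ≤ v') :
    bhThreshold G c' v' ≤ bhThreshold G c v := by
  refine sup'_le _ _ fun k hk => ?_
  split_ifs with hadm
  · have hle : (k : ℝ) * c' / #G ≤ k * c / #G := by gcongr
    refine le_sup'_of_le _ hk ?_
    rw [if_pos (hadm.trans (card_le_card fun j hj => ?_))]
    · exact hle
    · simp only [mem_filter] at hj ⊢
      exact ⟨hj.1, (hv j).trans (hj.2.trans hle)⟩
  · exact bhThreshold_nonneg G c v

theorem inv_le_card_div_bhThreshold {c : ℝ} {v : ι → ℝ} (hτ : 0 < bhThreshold G c v) :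
    c⁻¹ ≤ #{j ∈ G | v j ≤ bhThreshold G c v} / (#G * bhThreshold G c v) := by
  obtain ⟨k, -, hk⟩ := exists_mem_eq_sup' nonempty_range_add_one fun k =>
    if k ≤ #{j ∈ G | v j ≤ k * c / #G} then k * c / #G else (0 : ℝ)
  rw [← bhThreshold] at hk
  split_ifs at hk with hadm
  · rw [hk] at hτ ⊢
    obtain ⟨hkc, hn⟩ := div_ne_zero_iff.1 hτ.ne'
    calc c⁻¹ = k / (#G * (k * c / #G)) := by
          field_simp [left_ne_zero_of_mul hkc, right_ne_zero_of_mul hkc, hn]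
      _ ≤ _ := by gcongr
  · exact absurd hk hτ.ne'

end bhThreshold

theorem bhThreshold_pos_of_simes_le {m : ℕ} {G : Finset (Fin m)} (hG : G.Nonempty) {c : ℝ}
    {v : Fin m → ℝ} (hc : 0 < c) (h : simes G hG v ≤ c) : 0 < bhThreshold G c v := by
  obtain ⟨i, hi, hTi⟩ := exists_mem_eq_inf' hG fun i =>
    (#G : ℝ) / #{j ∈ G | v j ≤ v i} * v i
  set r := #{j ∈ G | v j ≤ v i}
  have hr : 0 < r := card_pos.2 ⟨i, mem_filter.2 ⟨hi, le_rfl⟩⟩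
  have hn : 0 < #G := card_pos.2 hG
  have hvi : v i ≤ r * c / #G := by
    rw [simes, hTi] at h
    rw [le_div_iff₀ (by positivity)]
    rw [div_mul_eq_mul_div, div_le_iff₀ (by positivity)] at h
    linarith
  have hadm : r ≤ #{j ∈ G | v j ≤ r * c / #G} :=
    card_le_card fun j hj => by
      simp only [mem_filter] at hj ⊢
      exact ⟨hj.1, hj.2.trans hvi⟩
  calc 0 < (r : ℝ) * c / #G := by positivity
    _ ≤ bhThreshold G c v :=
        le_sup'_of_le _ (mem_range.2 (Nat.lt_succ_of_le (card_filter_le _ _))) (by rw [if_pos hadm])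

theorem ofReal_ite_simes_le_sum {m : ℕ} (G : Finset (Fin m)) (hG : G.Nonempty) (c : ℝ)
    (v : Fin m → ℝ) :
    ENNReal.ofReal (if simes G hG v ≤ c then c⁻¹ else 0) ≤
      ∑ j ∈ G, (#G : ℝ≥0∞)⁻¹ *
        if v j ≤ bhThreshold G c v then (ENNReal.ofReal (bhThreshold G c v))⁻¹ else 0 := by
  by_cases h : simes G hG v ≤ c ∧ 0 < c
  · have hτ := bhThreshold_pos_of_simes_le hG h.2 h.1
    rw [if_pos h.1, ← mul_sum, ← sum_filter, sum_const, nsmul_eq_mul]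
    calc ENNReal.ofReal c⁻¹
        ≤ ENNReal.ofReal (#{j ∈ G | v j ≤ bhThreshold G c v} / (#G * bhThreshold G c v)) :=
          ENNReal.ofReal_le_ofReal (inv_le_card_div_bhThreshold G hτ)
      _ = _ := by
          have hn : (0 : ℝ) < #G := by exact_mod_cast card_pos.2 hG
          rw [ENNReal.ofReal_div_of_pos (mul_pos hn hτ), ENNReal.ofReal_mul hn.le,
            ENNReal.ofReal_natCast, ENNReal.ofReal_natCast, div_eq_mul_inv,
            ENNReal.mul_inv (by simp) (by simp)]
          ring
  · refine le_of_eq_of_le (ENNReal.ofReal_eq_zero.2 ?_) bot_le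
    split_ifs with hT
    · exact inv_nonpos.2 (not_lt.1 fun hc => h ⟨hT, hc⟩)
    · exact le_rfl

theorem lintegral_pi_ofReal_ite_simes_le_one {m : ℕ} (π : Fin m → Measure ℝ)
    [∀ i, IsProbabilityMeasure (π i)] (G : Finset (Fin m)) (hG : G.Nonempty)
    (hπ : ∀ j ∈ G, ∀ t, π j (Iic t) ≤ ENNReal.ofReal t) {f : (Fin m → ℝ) → ℝ}
    (hf : Antitone f) :
    ∫⁻ v, ENNReal.ofReal (if simes G hG v ≤ f v then (f v)⁻¹ else 0) ∂Measure.pi π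
      ≤ 1 := by
  set τ := fun v => bhThreshold G (f v) v
  set K : Fin m → (Fin m → ℝ) → ℝ≥0∞ := fun j v =>
    if v j ≤ τ v then (ENNReal.ofReal (τ v))⁻¹ else 0
  have hτ : Antitone τ := fun v v' hvv' => bhThreshold_anti G (hf hvv') hvv'
  have hK (j : Fin m) : AEMeasurable (K j) (Measure.pi π) :=
    (Measurable.ite (measurableSet_le measurable_fst measurable_snd)
      (ENNReal.measurable_ofReal.comp measurable_snd).inv measurable_const).comp_aemeasurable
      ((measurable_pi_apply j).aemeasurable.prodMk (hτ.aemeasurable_pi π))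
  calc ∫⁻ v, ENNReal.ofReal (if simes G hG v ≤ f v then (f v)⁻¹ else 0) ∂Measure.pi π
      ≤ ∫⁻ v, ∑ j ∈ G, (#G : ℝ≥0∞)⁻¹ * K j v ∂Measure.pi π :=
        lintegral_mono fun v => ofReal_ite_simes_le_sum G hG (f v) v
    _ = ∑ j ∈ G, (#G : ℝ≥0∞)⁻¹ * ∫⁻ v, K j v ∂Measure.pi π := by
        rw [lintegral_finsetSum' _ fun j _ => (hK j).const_mul _]
        exact sum_congr rfl fun j _ => lintegral_const_mul'' _ (hK j)
    _ ≤ ∑ _j ∈ G, (#G : ℝ≥0∞)⁻¹ * 1 := by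
        gcongr with j hj
        exact lintegral_pi_ite_le_inv_le_one π j (hπ j hj) hτ
    _ = 1 := by
        rw [sum_const, nsmul_eq_mul, mul_one]
        exact ENNReal.mul_inv_cancel (by simpa using hG.ne_empty) (by simp)

theorem integral_pi_ite_simes_le_one {m : ℕ} (π : Fin m → Measure ℝ)
    [∀ i, IsProbabilityMeasure (π i)] (G : Finset (Fin m)) (hG : G.Nonempty)
    (hπ : ∀ j ∈ G, ∀ t, π j (Iic t) ≤ ENNReal.ofReal t) {f : (Fin m → ℝ) → ℝ}
    (hf : Antitone f) (hf₀ : ∀ v, 0 ≤ f v) :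
    ∫ v, (if simes G hG v ≤ f v then (f v)⁻¹ else 0) ∂Measure.pi π ≤ 1 := by
  have hnonneg : ∀ v, 0 ≤ if simes G hG v ≤ f v then (f v)⁻¹ else 0 := fun v => by
    split_ifs
    exacts [inv_nonneg.2 (hf₀ v), le_rfl]
  rw [integral_eq_lintegral_of_nonneg_ae (.of_forall hnonneg)
    (aemeasurable_ite_simes_le G hG (hf.aemeasurable_pi π)).aestronglyMeasurable]
  exact ENNReal.toReal_le_of_le_ofReal zero_le_one
    (ENNReal.ofReal_one ▸ lintegral_pi_ofReal_ite_simes_le_one π G hG hπ hf)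

theorem map_apply_Iic_le_ofReal {Ω : Type*} [MeasurableSpace Ω] {μ : Measure Ω}
    [IsProbabilityMeasure μ] {X : Ω → ℝ} (hX : Measurable X)
    (h : ∀ t ∈ Icc (0 : ℝ) 1, μ {ω | X ω ≤ t} ≤ ENNReal.ofReal t) (t : ℝ) :
    μ.map X (Iic t) ≤ ENNReal.ofReal t := by
  rw [Measure.map_apply hX measurableSet_Iic]
  rcases lt_or_ge t 0 with ht | ht
  · calc μ (X ⁻¹' Iic t) ≤ μ {ω | X ω ≤ 0} := measure_mono fun _ hω => hω.trans ht.le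
      _ ≤ ENNReal.ofReal 0 := h 0 ⟨le_rfl, zero_le_one⟩
      _ ≤ ENNReal.ofReal t := by simp
  rcases le_or_gt t 1 with ht' | ht'
  · exact h t ⟨ht, ht'⟩
  · exact prob_le_one.trans (ENNReal.one_le_ofReal.2 ht'.le)

theorem simes_super_lemma_general
    {Ω : Type*} [MeasurableSpace Ω] (μ : Measure Ω) [IsProbabilityMeasure μ]
    (m : ℕ) (p : Fin m → Ω → ℝ) (hmeas : ∀ i, Measurable (p i))
    (hindep : iIndepFun p μ)
    (G : Finset (Fin m)) (hG : G.Nonempty)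
    (hnull : ∀ j ∈ G, ∀ t ∈ Set.Icc (0:ℝ) 1, μ {ω | p j ω ≤ t} ≤ ENNReal.ofReal t)
    (f : (Fin m → ℝ) → ℝ) (hf_anti : Antitone f) (hf_nonneg : ∀ v, 0 ≤ f v) :
    ∫ ω, (if simes G hG (fun j => p j ω) ≤ f (fun j => p j ω)
          then (f (fun j => p j ω))⁻¹ else 0) ∂μ ≤ 1 := by
  set π := fun j => μ.map (p j)
  have : ∀ j, IsProbabilityMeasure (π j) := fun j =>
    Measure.isProbabilityMeasure_map (hmeas j).aemeasurable
  have hlaw : μ.map (fun ω j => p j ω) = Measure.pi π :=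
    hindep.map_fun_eq_pi_map fun j => (hmeas j).aemeasurable
  have hF := aemeasurable_ite_simes_le G hG (hf_anti.aemeasurable_pi π)
  calc _ = ∫ v, (if simes G hG v ≤ f v then (f v)⁻¹ else 0) ∂Measure.pi π := by
        rw [← hlaw, integral_map (measurable_pi_lambda _ hmeas).aemeasurable
          (hlaw.symm ▸ hF.aestronglyMeasurable)]
    _ ≤ 1 := integral_pi_ite_simes_le_one π G hG
        (fun j hj => map_apply_Iic_le_ofReal (hmeas j) (hnull j hj)) hf_anti hf_nonneg

/-- Lemma D1(i): for independent p-values that are superuniform on a null subset `G`,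
and a coordinate-wise nonincreasing nonnegative `f`, Simes' combined p-value over `G`
satisfies `E[ 1{T(p_G) ≤ f(p)} / f(p) ] ≤ 1`. -/
theorem simes_super_lemma
    {Ω : Type*} [MeasurableSpace Ω] (μ : Measure Ω) [IsProbabilityMeasure μ]
    (m : ℕ) (p : Fin m → Ω → ℝ) (hmeas : ∀ i, Measurable (p i))
    (hrange : ∀ i ω, p i ω ∈ Set.Icc (0:ℝ) 1)
    (hindep : iIndepFun p μ)
    (G : Finset (Fin m)) (hG : G.Nonempty)
    (hnull : ∀ j ∈ G, ∀ t ∈ Set.Icc (0:ℝ) 1, μ {ω | p j ω ≤ t} ≤ ENNReal.ofReal t)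
    (f : (Fin m → ℝ) → ℝ) (hf_anti : Antitone f) (hf_nonneg : ∀ v, 0 ≤ f v) :
    ∫ ω, (if simes G hG (fun j => p j ω) ≤ f (fun j => p j ω)
          then (f (fun j => p j ω))⁻¹ else 0) ∂μ ≤ 1 :=
  simes_super_lemma_general μ m p hmeas hindep G hG hnull f hf_anti hf_nonneg
end

section
/- Let p_1,…,p_m be arbitrarily dependent random variables in [0,1], let G be a subset of indices, and let T be any combining function such that P(T(p_G) ≤ x) ≤ x for all x ∈ [0,1]. Let β be a reshaping function β(r) = ∫_0^r x dν(x) for a probability measure ν on (0,∞). Then for any constant c > 0 and any function f:[0,1]^m → [0,∞), E[ 1{T(p_G) ≤ c·β(f(p))} / (c·f(p)) ] ≤ 1. -/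
/-!
Write `g = 1{T ≤ c β(f)} / (c f)`. If `g > t > 0` then `c f > 0` and `f < 1/(c t)`, so by
monotonicity of `β` the event `{g > t}` is contained in `{T ≤ c β(1/(c t))}`, whose probability is
at most `c β(1/(c t))` by superuniformity. By the layer cake formula and Tonelli,
`E[g] = ∫₀^∞ P(g > t) dt ≤ ∫₀^∞ c β(1/(c t)) dt = ∫∫ c x 1{c x t ≤ 1} dt dν(x) = ν(0,∞) ≤ 1`.
-/

open MeasureTheory Set

noncomputable def reshaping (ν : Measure ℝ) (r : ℝ) : ℝ := ∫ x in Ioc 0 r, x ∂ν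

section Reshaping

variable {ν : Measure ℝ} [IsLocallyFiniteMeasure ν]

lemma integrableOn_id_Ioc (r : ℝ) : IntegrableOn (fun x => x) (Ioc 0 r) ν :=
  continuous_id.integrableOn_Icc.mono_set Ioc_subset_Icc_self

lemma monotone_reshaping : Monotone (reshaping ν) := fun _ s hrs =>
  setIntegral_mono_set (integrableOn_id_Ioc s)
    (ae_restrict_of_forall_mem measurableSet_Ioc fun _ hx => hx.1.le)
    (Ioc_subset_Ioc_right hrs).eventuallyLE

lemma ofReal_reshaping (r : ℝ) :
    ENNReal.ofReal (reshaping ν r) = ∫⁻ x in Ioc 0 r, ENNReal.ofReal x ∂ν :=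
  ofReal_integral_eq_lintegral_ofReal (integrableOn_id_Ioc r)
    (ae_restrict_of_forall_mem measurableSet_Ioc fun _ hx => hx.1.le)

lemma lintegral_ofReal_reshaping_div (a : ℝ) :
    ∫⁻ t in Ioi 0, ENNReal.ofReal (reshaping ν (a / t)) = ENNReal.ofReal a * ν (Ioi 0) := by
  have hmeas : Measurable (Function.uncurry fun t x : ℝ =>
      if t * x ≤ a then ENNReal.ofReal x else 0) :=
    Measurable.ite (measurableSet_le (by fun_prop) measurable_const) (by fun_prop) measurable_const
  calc ∫⁻ t in Ioi 0, ENNReal.ofReal (reshaping ν (a / t))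
      = ∫⁻ t in Ioi 0, ∫⁻ x in Ioi 0, (if t * x ≤ a then ENNReal.ofReal x else 0) ∂ν := by
        refine setLIntegral_congr_fun measurableSet_Ioi fun (t : ℝ) (ht : 0 < t) => ?_
        rw [ofReal_reshaping, ← Iic_inter_Ioi, ← setLIntegral_indicator measurableSet_Iic]
        refine setLIntegral_congr_fun measurableSet_Ioi fun x _ => ?_
        simp only [indicator_apply, mem_Iic, le_div_iff₀' ht]
    _ = ∫⁻ x in Ioi 0, (∫⁻ t in Ioi (0 : ℝ), if t * x ≤ a then ENNReal.ofReal x else 0) ∂ν :=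
        lintegral_lintegral_swap hmeas.aemeasurable
    _ = ∫⁻ x in Ioi 0, ENNReal.ofReal a ∂ν := by
        refine setLIntegral_congr_fun measurableSet_Ioi fun (x : ℝ) (hx : 0 < x) => ?_
        calc (∫⁻ t in Ioi (0 : ℝ), if t * x ≤ a then ENNReal.ofReal x else 0)
            = ∫⁻ t in Ioi (0 : ℝ), (Iic (a / x)).indicator (fun _ => ENNReal.ofReal x) t :=
              lintegral_congr fun t => by simp only [indicator_apply, mem_Iic, le_div_iff₀ hx]
          _ = ENNReal.ofReal a := by
            rw [setLIntegral_indicator measurableSet_Iic, Iic_inter_Ioi, setLIntegral_const,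
              Real.volume_Ioc, sub_zero, ← ENNReal.ofReal_mul hx.le, mul_div_cancel₀ _ hx.ne']
    _ = ENNReal.ofReal a * ν (Ioi 0) := setLIntegral_const _ _

end Reshaping

lemma le_mul_of_lt_ite_inv_mul {β : ℝ → ℝ} (hβ : Monotone β) {c t u y : ℝ} (hc : 0 < c)
    (ht : 0 < t) (h : t < if u ≤ c * β y then (c * y)⁻¹ else 0) : u ≤ c * β (c⁻¹ / t) := by
  split_ifs at h with hu
  · have hcy : 0 < c * y := inv_pos.mp (ht.trans h)
    have hy : y ≤ c⁻¹ / t := by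
      rw [div_eq_mul_inv, le_inv_mul_iff₀ hc]
      exact ((lt_inv_comm₀ ht hcy).mp h).le
    exact hu.trans (mul_le_mul_of_nonneg_left (hβ hy) hc.le)
  · exact absurd h ht.le.not_gt

lemma measure_le_ofReal_of_superuniform {Ω : Type*} [MeasurableSpace Ω] {μ : Measure Ω}
    [IsProbabilityMeasure μ] {U : Ω → ℝ}
    (hU : ∀ x ∈ Icc (0 : ℝ) 1, μ {ω | U ω ≤ x} ≤ ENNReal.ofReal x) (x : ℝ) :
    μ {ω | U ω ≤ x} ≤ ENNReal.ofReal x := by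
  rcases lt_or_ge x 0 with hx | hx
  · calc μ {ω | U ω ≤ x} ≤ μ {ω | U ω ≤ 0} := measure_mono fun ω hω => le_trans hω hx.le
      _ ≤ ENNReal.ofReal 0 := hU 0 ⟨le_rfl, zero_le_one⟩
      _ ≤ ENNReal.ofReal x := by simp
  rcases le_or_gt x 1 with h1 | h1
  · exact hU x ⟨hx, h1⟩
  · exact prob_le_one.trans (ENNReal.one_le_ofReal.mpr h1.le)

open scoped Classical

theorem reshaped_super_lemma_general
    {Ω : Type*} [MeasurableSpace Ω] (μ : Measure Ω) [IsProbabilityMeasure μ]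
    (m : ℕ) (p : Fin m → Ω → ℝ)
    (T : (Fin m → ℝ) → ℝ)
    (hT_super : ∀ x ∈ Set.Icc (0:ℝ) 1,
        μ {ω | T (fun j => p j ω) ≤ x} ≤ ENNReal.ofReal x)
    (ν : Measure ℝ) [IsProbabilityMeasure ν]
    (β : ℝ → ℝ) (hβ : ∀ r, β r = ∫ x in Set.Ioc (0:ℝ) r, x ∂ν)
    (c : ℝ) (hc : 0 < c)
    (f : (Fin m → ℝ) → ℝ) (hf_nonneg : ∀ v, 0 ≤ f v) :
    ∫ ω, (if T (fun j => p j ω) ≤ c * β (f (fun j => p j ω))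
          then (c * f (fun j => p j ω))⁻¹ else 0) ∂μ ≤ 1 := by
  obtain rfl : β = reshaping ν := funext hβ
  set g : Ω → ℝ := fun ω => if T (fun j => p j ω) ≤ c * reshaping ν (f (fun j => p j ω))
    then (c * f (fun j => p j ω))⁻¹ else 0
  have hg_nonneg : ∀ ω, 0 ≤ g ω := fun ω => by
    simp only [g]
    split_ifs
    · exact inv_nonneg.mpr (mul_nonneg hc.le (hf_nonneg _))
    · exact le_rfl
  by_cases hg : Integrable g μ
  swap
  · rw [integral_undef hg]; exact zero_le_one
  have hlevel : ∀ t ∈ Ioi (0 : ℝ), μ {ω | t < g ω} ≤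
      ENNReal.ofReal c * ENNReal.ofReal (reshaping ν (c⁻¹ / t)) := fun t (ht : 0 < t) =>
    (measure_mono fun ω hω => le_mul_of_lt_ite_inv_mul monotone_reshaping hc ht hω).trans
      ((measure_le_ofReal_of_superuniform hT_super _).trans_eq (ENNReal.ofReal_mul hc.le))
  have hlintegral : ∫⁻ ω, ENNReal.ofReal (g ω) ∂μ ≤ 1 := calc
    _ = ∫⁻ t in Ioi 0, μ {ω | t < g ω} :=
      lintegral_eq_lintegral_meas_lt μ (ae_of_all _ hg_nonneg) hg.aemeasurable
    _ ≤ ∫⁻ t in Ioi 0, ENNReal.ofReal c * ENNReal.ofReal (reshaping ν (c⁻¹ / t)) :=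
      setLIntegral_mono' measurableSet_Ioi hlevel
    _ = ν (Ioi 0) := by
      rw [lintegral_const_mul' _ _ ENNReal.ofReal_ne_top, lintegral_ofReal_reshaping_div,
        ← mul_assoc, ← ENNReal.ofReal_mul hc.le, mul_inv_cancel₀ hc.ne', ENNReal.ofReal_one,
        one_mul]
    _ ≤ 1 := prob_le_one
  rw [integral_eq_lintegral_of_nonneg_ae (ae_of_all _ hg_nonneg) hg.aestronglyMeasurable]
  exact ENNReal.toReal_le_of_le_ofReal zero_le_one (hlintegral.trans_eq ENNReal.ofReal_one.symm)

/-- Lemma D1(iii): for arbitrarily dependent p-values, a combining function `T` that is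
superuniform on the indices in `G`, a reshaping function `β(r) = ∫_{(0,r]} x dν(x)` for a
probability measure `ν` on `(0,∞)`, any `c > 0` and any nonnegative `f`,
`E[ 1{T(p_G) ≤ c·β(f(p))} / (c·f(p)) ] ≤ 1`. -/
theorem reshaped_super_lemma
    {Ω : Type*} [MeasurableSpace Ω] (μ : Measure Ω) [IsProbabilityMeasure μ]
    (m : ℕ) (p : Fin m → Ω → ℝ) (hmeas : ∀ i, Measurable (p i))
    (hrange : ∀ i ω, p i ω ∈ Set.Icc (0:ℝ) 1)
    (G : Finset (Fin m))
    (T : (Fin m → ℝ) → ℝ)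
    (hT_dep : ∀ v₁ v₂ : Fin m → ℝ, (∀ i ∈ G, v₁ i = v₂ i) → T v₁ = T v₂)
    (hT_super : ∀ x ∈ Set.Icc (0:ℝ) 1,
        μ {ω | T (fun j => p j ω) ≤ x} ≤ ENNReal.ofReal x)
    (ν : Measure ℝ) [IsProbabilityMeasure ν] (hν : ν {x : ℝ | x ≤ 0} = 0)
    (β : ℝ → ℝ) (hβ : ∀ r, β r = ∫ x in Set.Ioc (0:ℝ) r, x ∂ν)
    (c : ℝ) (hc : 0 < c)
    (f : (Fin m → ℝ) → ℝ) (hf_nonneg : ∀ v, 0 ≤ f v) :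
    ∫ ω, (if T (fun j => p j ω) ≤ c * β (f (fun j => p j ω))
          then (c * f (fun j => p j ω))⁻¹ else 0) ∂μ ≤ 1 :=
  reshaped_super_lemma_general μ m p T hT_super ν β hβ c hc f hf_nonneg
end

section
/- Let p_1,…,p_n be independent with P(p_j ≤ u) ≤ u for all j in a group of indices whose null subset is nonempty. Let π̂_{0,j} = (1 + Σ_{i≠j} 1{p_i > λ})/((1−λ)n) for fixed λ ∈ (0,1). Then for each null index j, E[1/π̂_{0,j}] ≤ n/n_0, where n_0 is the number of null indices in the group. -/
/-!
Since `(1 + m)⁻¹ = ∫₀¹ tᵐ dt`, Fubini turns `E[1/(1 + B)]` into `∫₀¹ E[t^B] dt`. When `B` counts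
`k` independent events of probabilities `qᵢ ≥ r`, its generating function factorizes,
`E[t^B] = ∏ (1 - (1 - t) qᵢ) ≤ (r t + 1 - r)ᵏ`, and integrating gives `E[1/(1 + B)] ≤ 1/((k + 1) r)`.
Storey's leave-one-out count dominates the number of null p-values other than `p_j` exceeding `λ`;
by superuniformity each does so with probability at least `1 - λ`, so `k = n₀ - 1` and `r = 1 - λ`
give the bound `n / n₀`.
-/

open MeasureTheory ProbabilityTheory Finset
open scoped Classical

lemma ProbabilityTheory.iIndepFun.iIndepSet_preimage {Ω ι : Type*} [MeasurableSpace Ω]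
    {μ : Measure Ω} {β : ι → Type*} [∀ i, MeasurableSpace (β i)] {X : ∀ i, Ω → β i}
    (hX : iIndepFun X μ) (hXm : ∀ i, Measurable (X i)) {S : ∀ i, Set (β i)}
    (hS : ∀ i, MeasurableSet (S i)) : iIndepSet (fun i => X i ⁻¹' S i) μ :=
  (iIndepSet_iff_meas_biInter fun i => hXm i (hS i)).2 fun s =>
    iIndepFun_iff_measure_inter_preimage_eq_mul.1 hX s fun i _ => hS i

lemma inv_natCast_add_one_eq_integral_pow (k : ℕ) :
    ((k : ℝ) + 1)⁻¹ = ∫ t in (0:ℝ)..1, t ^ k := by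
  simp [integral_pow]

lemma integral_mul_add_pow_le {r : ℝ} (hr0 : 0 < r) (hr1 : r ≤ 1) (k : ℕ) :
    ∫ t in (0:ℝ)..1, (r * t + (1 - r)) ^ k ≤ (((k : ℝ) + 1) * r)⁻¹ := by
  rw [intervalIntegral.integral_comp_mul_add (fun x => x ^ k) hr0.ne', integral_pow]
  have hpow : 0 ≤ (1 - r) ^ (k + 1) := pow_nonneg (by linarith) _
  rw [smul_eq_mul, mul_inv, mul_comm]
  gcongr
  rw [div_le_iff₀ (by positivity), inv_mul_cancel₀ (by positivity)]
  simp only [mul_one, mul_zero, zero_add, add_sub_cancel, one_pow]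
  linarith

lemma integral_integral_pow_swap {Ω : Type*} [MeasurableSpace Ω] {μ : Measure Ω}
    [IsFiniteMeasure μ] {N : Ω → ℕ} (hN : Measurable N) :
    ∫ ω, (∫ t in (0:ℝ)..1, t ^ N ω) ∂μ = ∫ t in (0:ℝ)..1, ∫ ω, t ^ N ω ∂μ := by
  simp only [intervalIntegral.integral_of_le zero_le_one]
  refine integral_integral_swap (Integrable.of_bound ?_ 1 ?_)
  · exact (measurable_snd.pow (hN.comp measurable_fst)).aestronglyMeasurable
  · filter_upwards [Measure.quasiMeasurePreserving_snd.ae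
      (ae_restrict_mem measurableSet_Ioc)] with x hx
    rw [Function.uncurry_def, Real.norm_eq_abs, abs_pow]
    exact pow_le_one₀ (abs_nonneg _) (abs_le.2 ⟨by linarith [hx.1], hx.2⟩)

section CountOfEvents

variable {Ω ι : Type*} [Fintype ι] {A : ι → Set Ω}

lemma pow_card_mem_eq_prod (t : ℝ) (ω : Ω) :
    t ^ #{i | ω ∈ A i} = ∏ i, (1 - (1 - t) * (A i).indicator (fun _ => 1) ω) := by
  rw [← prod_const, prod_filter]
  refine prod_congr rfl fun i _ => ?_
  by_cases h : ω ∈ A i <;> simp [h]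

variable [MeasurableSpace Ω] {μ : Measure Ω}

lemma measurable_card_mem (hA : ∀ i, MeasurableSet (A i)) :
    Measurable fun ω => #{i | ω ∈ A i} := by
  simp_rw [card_filter]
  exact Finset.measurable_sum _ fun i _ => Measurable.ite (hA i) measurable_const measurable_const

lemma integrable_inv_one_add_card_mem [IsFiniteMeasure μ] (hAm : ∀ i, MeasurableSet (A i)) :
    Integrable (fun ω => (1 + (#{i | ω ∈ A i} : ℝ))⁻¹) μ := by
  refine Integrable.of_bound
    ((measurable_from_nat.comp (measurable_card_mem hAm)).const_add 1).inv.aestronglyMeasurable 1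
    (Filter.Eventually.of_forall fun ω => ?_)
  rw [Real.norm_eq_abs, abs_inv, abs_of_nonneg (by positivity)]
  exact inv_le_one_of_one_le₀ (by simp)

lemma ProbabilityTheory.iIndepSet.integral_pow_card_mem [IsProbabilityMeasure μ]
    (hA : iIndepSet A μ) (hAm : ∀ i, MeasurableSet (A i)) (t : ℝ) :
    ∫ ω, t ^ #{i | ω ∈ A i} ∂μ = ∏ i, (1 - (1 - t) * μ.real (A i)) := by
  simp_rw [pow_card_mem_eq_prod]
  rw [(hA.iIndepFun_indicator (β := ℝ)).integral_fun_prod_comp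
    (f := fun _ y => 1 - (1 - t) * y)
    (fun i => (measurable_one.indicator (hAm i)).aemeasurable) (fun i => by fun_prop)]
  refine prod_congr rfl fun i _ => ?_
  rw [integral_sub (integrable_const 1) (((integrable_const 1).indicator (hAm i)).const_mul _),
    integral_const_mul, integral_indicator_const 1 (hAm i)]
  simp

lemma ProbabilityTheory.iIndepSet.integral_inv_one_add_card_mem_le [IsProbabilityMeasure μ]
    (hA : iIndepSet A μ) (hAm : ∀ i, MeasurableSet (A i)) {r : ℝ} (hr0 : 0 < r) (hr1 : r ≤ 1)
    (hr : ∀ i, r ≤ μ.real (A i)) :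
    ∫ ω, (1 + (#{i | ω ∈ A i} : ℝ))⁻¹ ∂μ ≤ ((Fintype.card ι + 1) * r)⁻¹ := by
  calc ∫ ω, (1 + (#{i | ω ∈ A i} : ℝ))⁻¹ ∂μ
      = ∫ ω, (∫ t in (0:ℝ)..1, t ^ #{i | ω ∈ A i}) ∂μ := by
        simp_rw [add_comm (1 : ℝ), inv_natCast_add_one_eq_integral_pow]
    _ = ∫ t in (0:ℝ)..1, ∏ i, (1 - (1 - t) * μ.real (A i)) := by
        rw [integral_integral_pow_swap (measurable_card_mem hAm)]
        simp_rw [hA.integral_pow_card_mem hAm]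
    _ ≤ ∫ t in (0:ℝ)..1, (r * t + (1 - r)) ^ Fintype.card ι := by
        refine intervalIntegral.integral_mono_on zero_le_one
          ((by fun_prop : Continuous _).intervalIntegrable _ _)
          ((by fun_prop : Continuous _).intervalIntegrable _ _)
          fun t ht => ?_
        rw [← card_univ, ← prod_const]
        refine prod_le_prod (fun i _ => ?_) fun i _ => ?_
        · nlinarith [measureReal_le_one (μ := μ) (s := A i), ht.1, ht.2]
        · nlinarith [hr i, ht.1, ht.2]
    _ ≤ ((Fintype.card ι + 1) * r)⁻¹ := integral_mul_add_pow_le hr0 hr1 _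

end CountOfEvents

lemma one_sub_le_measureReal_lt {Ω : Type*} [MeasurableSpace Ω] {μ : Measure Ω}
    [IsProbabilityMeasure μ] {X : Ω → ℝ} (hX : Measurable X) {t : ℝ} (ht : 0 ≤ t) (h : μ {ω | X ω ≤ t} ≤ ENNReal.ofReal t) :
    1 - t ≤ μ.real {ω | t < X ω} := by
  have hc : {ω | t < X ω} = {ω | X ω ≤ t}ᶜ := by ext; simp
  rw [hc, probReal_compl_eq_one_sub (measurableSet_le hX measurable_const)]
  have hle : μ.real {ω | X ω ≤ t} ≤ t := ENNReal.toReal_le_of_le_ofReal ht h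
  linarith

theorem storey_leave_one_out_bound_general
    {Ω : Type*} [MeasurableSpace Ω] (μ : Measure Ω) [IsProbabilityMeasure μ]
    (n : ℕ) (p : Fin n → Ω → ℝ) (hmeas : ∀ i, Measurable (p i))
    (hindep : iIndepFun p μ)
    (N : Finset (Fin n))
    (hnull : ∀ i ∈ N, ∀ t ∈ Set.Icc (0:ℝ) 1, μ {ω | p i ω ≤ t} ≤ ENNReal.ofReal t)
    (j : Fin n) (hj : j ∈ N)
    (lam : ℝ) (hlam : lam ∈ Set.Ioo (0:ℝ) 1) :
    ∫ ω, ((1 + ((univ.filter fun i => i ≠ j ∧ lam < p i ω).card : ℝ))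
          / ((1 - lam) * (n : ℝ)))⁻¹ ∂μ ≤ (n : ℝ) / (N.card : ℝ) := by
  obtain ⟨hlam0, hlam1⟩ := hlam
  set T := N.erase j
  let A : T → Set Ω := fun i => p i ⁻¹' Set.Ioi lam
  have hAm : ∀ i, MeasurableSet (A i) := fun i => hmeas i measurableSet_Ioi
  have hA : iIndepSet A μ := (hindep.precomp Subtype.val_injective).iIndepSet_preimage
    (fun i => hmeas i) fun _ => measurableSet_Ioi
  have hr : ∀ i, 1 - lam ≤ μ.real (A i) := fun i => one_sub_le_measureReal_lt (hmeas i)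
    hlam0.le (hnull i (mem_of_mem_erase i.2) lam ⟨hlam0.le, hlam1.le⟩)
  have hcount : ∀ ω, #{i | ω ∈ A i} ≤ #{i | i ≠ j ∧ lam < p i ω} := fun ω =>
    card_le_card_of_injOn Subtype.val
      (fun i hi => by simpa [A, ne_of_mem_erase i.2] using hi)
      Subtype.val_injective.injOn
  have hcard : (Fintype.card T + 1 : ℝ) = N.card := by
    rw [Fintype.card_coe]; exact_mod_cast card_erase_add_one hj
  calc ∫ ω, ((1 + (#{i | i ≠ j ∧ lam < p i ω} : ℝ)) / ((1 - lam) * n))⁻¹ ∂μ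
      ≤ ∫ ω, (1 - lam) * n * (1 + (#{i | ω ∈ A i} : ℝ))⁻¹ ∂μ := by
        refine integral_mono_of_nonneg (Filter.Eventually.of_forall fun ω => by positivity)
          ((integrable_inv_one_add_card_mem hAm).const_mul _)
          (Filter.Eventually.of_forall fun ω => ?_)
        dsimp only
        rw [inv_div, div_eq_mul_inv]
        gcongr
        exact_mod_cast hcount ω
    _ = (1 - lam) * n * ∫ ω, (1 + (#{i | ω ∈ A i} : ℝ))⁻¹ ∂μ := integral_const_mul _ _
    _ ≤ (1 - lam) * n * ((Fintype.card T + 1) * (1 - lam))⁻¹ := by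
        gcongr
        exact hA.integral_inv_one_add_card_mem_le hAm (by linarith) (by linarith) hr
    _ = n / N.card := by
        rw [hcard]
        field_simp

/-- Corollary 13 of Blanchard–Roquain (2009): for independent p-values with superuniform
nulls, Storey's leave-one-out estimator `π̂_{0,j} = (1 + Σ_{i≠j} 1{p_i > λ})/((1−λ)n)`
satisfies `E[1/π̂_{0,j}] ≤ n/n_0` for each null index `j`, where `n_0` is the number
of null indices in the group. -/
theorem storey_leave_one_out_bound
    {Ω : Type*} [MeasurableSpace Ω] (μ : Measure Ω) [IsProbabilityMeasure μ]
    (n : ℕ) (p : Fin n → Ω → ℝ) (hmeas : ∀ i, Measurable (p i))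
    (hrange : ∀ i ω, p i ω ∈ Set.Icc (0:ℝ) 1)
    (hindep : iIndepFun p μ)
    (N : Finset (Fin n))
    (hnull : ∀ i ∈ N, ∀ t ∈ Set.Icc (0:ℝ) 1, μ {ω | p i ω ≤ t} ≤ ENNReal.ofReal t)
    (j : Fin n) (hj : j ∈ N)
    (lam : ℝ) (hlam : lam ∈ Set.Ioo (0:ℝ) 1) :
    ∫ ω, ((1 + ((univ.filter fun i => i ≠ j ∧ lam < p i ω).card : ℝ))
          / ((1 - lam) * (n : ℝ)))⁻¹ ∂μ ≤ (n : ℝ) / (N.card : ℝ) :=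
  storey_leave_one_out_bound_general μ n p hmeas hindep N hnull j hj lam hlam
end
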